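/- arXiv:2406.08032 — 5 statements merged into one kernel-verified Lean document; each statement's English description precedes it below -/
import Mathlib

section
/- For every x = (x₁,x₂,a) ∈ G with x ≠ e, the function k₁ is differentiable in the x₁-variable at x and, with r = r(x), 2π² a ∂_{x₁} k₁(x) = a⁻¹ (x₁²/sinh r) · (2r² cosh² r + r² + 2 sinh² r + 3 r sinh r cosh r)/(r³ sinh⁴ r) − (sinh r + r cosh r)/(r² sinh³ r). -/
open Real MeasureTheory Set

noncomputable section

/-- `cosh` of the hyperbolic distance from `p = (x₁, x₂, a)` to the identity `e = (0,0,1)`. -/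
def chD (p : ℝ × ℝ × ℝ) : ℝ :=
  (p.2.2 + (p.2.2)⁻¹ + (p.2.2)⁻¹ * (p.1 ^ 2 + p.2.1 ^ 2)) / 2

/-- The hyperbolic distance `r(p)` from `p` to the identity, i.e. `arcosh (chD p)`. -/
def rD (p : ℝ × ℝ × ℝ) : ℝ := Real.log (chD p + Real.sqrt (chD p ^ 2 - 1))

/-- `|x| = √(x₁² + x₂²)`. -/
def nm (p : ℝ × ℝ × ℝ) : ℝ := Real.sqrt (p.1 ^ 2 + p.2.1 ^ 2)

/-- The kernel `k₁`. -/
def k1 (p : ℝ × ℝ × ℝ) : ℝ :=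
  -(2 * Real.pi ^ 2)⁻¹ * (p.2.2)⁻¹ * p.1 *
    (Real.sinh (rD p) + rD p * Real.cosh (rD p)) / (rD p ^ 2 * Real.sinh (rD p) ^ 3)

/-- The kernel `k₂`. -/
def k2 (p : ℝ × ℝ × ℝ) : ℝ :=
  -(2 * Real.pi ^ 2)⁻¹ * (p.2.2)⁻¹ * p.2.1 *
    (Real.sinh (rD p) + rD p * Real.cosh (rD p)) / (rD p ^ 2 * Real.sinh (rD p) ^ 3)

/-- The kernel `k₀`. -/
def k0 (p : ℝ × ℝ × ℝ) : ℝ :=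
  (2 * Real.pi ^ 2)⁻¹ *
    (-(Real.sinh (rD p) + rD p * Real.cosh (rD p)) +
      (p.2.2)⁻¹ * (Real.cosh (rD p) * Real.sinh (rD p) + rD p)) /
    (rD p ^ 2 * Real.sinh (rD p) ^ 3)

/-- `y⁻¹ · x` in the group `G = ℝ² ⋊ ℝ⁺`. -/
def ginvMul (y x : ℝ × ℝ × ℝ) : ℝ × ℝ × ℝ :=
  ((y.2.2)⁻¹ * (x.1 - y.1), (y.2.2)⁻¹ * (x.2.1 - y.2.1), x.2.2 / y.2.2)

/-- The right Haar measure `ρ`, of density `a⁻¹` w.r.t. Lebesgue measure on `{a > 0}`. -/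
def ρG : Measure (ℝ × ℝ × ℝ) :=
  (volume.restrict {p : ℝ × ℝ × ℝ | 0 < p.2.2}).withDensity
    (fun p => ENNReal.ofReal (p.2.2)⁻¹)

/-- The left Haar measure `λ`, of density `a⁻³` w.r.t. Lebesgue measure on `{a > 0}`. -/
def lG : Measure (ℝ × ℝ × ℝ) :=
  (volume.restrict {p : ℝ × ℝ × ℝ | 0 < p.2.2}).withDensity
    (fun p => ENNReal.ofReal ((p.2.2) ^ 3)⁻¹)

/-- The set `P₀ = [−1,1] × [−1,1] × [e⁻¹, e]`. -/
def P0 : Set (ℝ × ℝ × ℝ) :=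
  {p | p.1 ∈ Icc (-1 : ℝ) 1 ∧ p.2.1 ∈ Icc (-1 : ℝ) 1 ∧
       p.2.2 ∈ Icc (Real.exp (-1)) (Real.exp 1)}

/-- The set `2P₀ = [−2,2] × [−2,2] × [e⁻², e²]`. -/
def twoP0 : Set (ℝ × ℝ × ℝ) :=
  {p | p.1 ∈ Icc (-2 : ℝ) 2 ∧ p.2.1 ∈ Icc (-2 : ℝ) 2 ∧
       p.2.2 ∈ Icc (Real.exp (-2)) (Real.exp 2)}

/-- The set `P_L = [L−1,L+1] × [−1,1] × [e⁻¹, e]`. -/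
def PL (L : ℝ) : Set (ℝ × ℝ × ℝ) :=
  {p | p.1 ∈ Icc (L - 1) (L + 1) ∧ p.2.1 ∈ Icc (-1 : ℝ) 1 ∧
       p.2.2 ∈ Icc (Real.exp (-1)) (Real.exp 1)}

/-- The set `2P_L = [L−2,L+2] × [−2,2] × [e⁻², e²]`. -/
def twoPL (L : ℝ) : Set (ℝ × ℝ × ℝ) :=
  {p | p.1 ∈ Icc (L - 2) (L + 2) ∧ p.2.1 ∈ Icc (-2 : ℝ) 2 ∧
       p.2.2 ∈ Icc (Real.exp (-2)) (Real.exp 2)}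

/-- the formula for `2π² a ∂_{x₁} k₁(x)`. -/
theorem stmt1 (x₁ x₂ a : ℝ) (ha : 0 < a)
    (hne : (x₁, x₂, a) ≠ ((0 : ℝ), (0 : ℝ), (1 : ℝ))) :
    ∃ D : ℝ, HasDerivAt (fun t => k1 (t, x₂, a)) D x₁ ∧
      2 * Real.pi ^ 2 * (a * D) =
        a⁻¹ * (x₁ ^ 2 / Real.sinh (rD (x₁, x₂, a))) *
          ((2 * rD (x₁, x₂, a) ^ 2 * Real.cosh (rD (x₁, x₂, a)) ^ 2 +
              rD (x₁, x₂, a) ^ 2 + 2 * Real.sinh (rD (x₁, x₂, a)) ^ 2 +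
              3 * rD (x₁, x₂, a) * Real.sinh (rD (x₁, x₂, a)) *
                Real.cosh (rD (x₁, x₂, a))) /
            (rD (x₁, x₂, a) ^ 3 * Real.sinh (rD (x₁, x₂, a)) ^ 4)) -
        (Real.sinh (rD (x₁, x₂, a)) + rD (x₁, x₂, a) * Real.cosh (rD (x₁, x₂, a))) /
          (rD (x₁, x₂, a) ^ 2 * Real.sinh (rD (x₁, x₂, a)) ^ 3) := by
  have hπ : (Real.pi : ℝ) ≠ 0 := Real.pi_ne_zero
  have ha' : a ≠ 0 := ne_of_gt ha
  -- positivity of (a-1)^2 + x₁^2 + x₂^2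
  have hpos : 0 < (a - 1) ^ 2 + x₁ ^ 2 + x₂ ^ 2 := by
    by_contra h
    push_neg at h
    have e1 : (a - 1) ^ 2 = 0 :=
      le_antisymm (by nlinarith [sq_nonneg x₁, sq_nonneg x₂]) (sq_nonneg _)
    have e2 : x₁ ^ 2 = 0 :=
      le_antisymm (by nlinarith [sq_nonneg (a - 1), sq_nonneg x₂]) (sq_nonneg _)
    have e3 : x₂ ^ 2 = 0 :=
      le_antisymm (by nlinarith [sq_nonneg (a - 1), sq_nonneg x₁]) (sq_nonneg _)
    apply hne
    have : a = 1 := by nlinarith [e1]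
    have hx1 : x₁ = 0 := by nlinarith [e2]
    have hx2 : x₂ = 0 := by nlinarith [e3]
    simp [this, hx1, hx2]
  set cv : ℝ := chD (x₁, x₂, a) with hcvdef
  have hcveq : cv = (a + a⁻¹ + a⁻¹ * (x₁ ^ 2 + x₂ ^ 2)) / 2 := rfl
  have hcv1 : 1 < cv := by
    have h1 : cv - 1 = ((a - 1) ^ 2 + x₁ ^ 2 + x₂ ^ 2) / (2 * a) := by
      rw [hcveq]; field_simp; ring
    have : 0 < cv - 1 := by rw [h1]; positivity
    linarith
  have hcvsq : 0 < cv ^ 2 - 1 := by nlinarith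
  set sv : ℝ := Real.sqrt (cv ^ 2 - 1) with hsvdef
  have hsv0 : 0 < sv := Real.sqrt_pos.mpr hcvsq
  have hsv2 : sv ^ 2 = cv ^ 2 - 1 := Real.sq_sqrt hcvsq.le
  set r : ℝ := rD (x₁, x₂, a) with hrdef
  have hrd : r = Real.log (cv + sv) := rfl
  have hcs1 : 1 < cv + sv := by linarith
  have hcs0 : (0:ℝ) < cv + sv := by linarith
  have hr0 : 0 < r := by rw [hrd]; exact Real.log_pos hcs1
  have hr' : r ≠ 0 := ne_of_gt hr0
  have hexp : Real.exp r = cv + sv := by rw [hrd, Real.exp_log hcs0]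
  have hmul : (cv - sv) * (cv + sv) = 1 := by nlinarith [hsv2]
  have hexpneg : Real.exp (-r) = cv - sv := by
    rw [Real.exp_neg, hexp]
    exact (eq_inv_of_mul_eq_one_left hmul).symm
  have hcosh : Real.cosh r = cv := by
    rw [Real.cosh_eq, hexp, hexpneg]; ring
  have hsinh : Real.sinh r = sv := by
    rw [Real.sinh_eq, hexp, hexpneg]; ring
  have hS0 : 0 < Real.sinh r := by rw [hsinh]; exact hsv0
  have hS' : Real.sinh r ≠ 0 := ne_of_gt hS0
  -- derivative of chD in the first variable
  have hcder : HasDerivAt (fun t => chD (t, x₂, a)) (a⁻¹ * x₁) x₁ := by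
    have h := ((((hasDerivAt_pow 2 x₁).add_const (x₂ ^ 2)).const_mul a⁻¹).const_add
      (a + a⁻¹)).div_const 2
    refine h.congr_deriv ?_
    push_cast
    ring
  -- derivative of rD in the first variable
  have hR : HasDerivAt (fun t => rD (t, x₂, a)) (a⁻¹ * x₁ / Real.sinh r) x₁ := by
    have hsq : HasDerivAt (fun t => chD (t, x₂, a) ^ 2 - 1)
        (2 * cv ^ 1 * (a⁻¹ * x₁)) x₁ := (hcder.pow 2).sub_const 1
    have hsqrt : HasDerivAt (fun t => Real.sqrt (chD (t, x₂, a) ^ 2 - 1))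
        (1 / (2 * sv) * (2 * cv ^ 1 * (a⁻¹ * x₁))) x₁ := by
      have := (Real.hasDerivAt_sqrt (ne_of_gt hcvsq)).comp x₁ hsq
      simpa [hsvdef, Function.comp_def] using this
    have hadd := hcder.add hsqrt
    have hlog := hadd.log (by positivity : cv + sv ≠ 0)
    refine hlog.congr_deriv ?_
    rw [show ((fun t => chD (t, x₂, a)) + fun t => √(chD (t, x₂, a) ^ 2 - 1)) x₁ = cv + sv from rfl]
    rw [hsinh]
    field_simp
    ring

  -- derivative of k1
  set c0 : ℝ := -(2 * Real.pi ^ 2)⁻¹ * a⁻¹ with hc0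
  have hsinhR : HasDerivAt (fun t => Real.sinh (rD (t, x₂, a)))
      (Real.cosh r * (a⁻¹ * x₁ / Real.sinh r)) x₁ := hR.sinh
  have hcoshR : HasDerivAt (fun t => Real.cosh (rD (t, x₂, a)))
      (Real.sinh r * (a⁻¹ * x₁ / Real.sinh r)) x₁ := hR.cosh
  have hN : HasDerivAt
      (fun t => Real.sinh (rD (t, x₂, a)) + rD (t, x₂, a) * Real.cosh (rD (t, x₂, a)))
      (Real.cosh r * (a⁻¹ * x₁ / Real.sinh r) +
        (a⁻¹ * x₁ / Real.sinh r * Real.cosh r +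
          r * (Real.sinh r * (a⁻¹ * x₁ / Real.sinh r)))) x₁ :=
    hsinhR.add (hR.mul hcoshR)
  have hM : HasDerivAt (fun t => rD (t, x₂, a) ^ 2 * Real.sinh (rD (t, x₂, a)) ^ 3)
      ((2 : ℕ) * r ^ 1 * (a⁻¹ * x₁ / Real.sinh r) * Real.sinh r ^ 3 +
        r ^ 2 * ((3 : ℕ) * Real.sinh r ^ 2 * (Real.cosh r * (a⁻¹ * x₁ / Real.sinh r)))) x₁ :=
    (hR.pow 2).mul (hsinhR.pow 3)
  have hM0 : r ^ 2 * Real.sinh r ^ 3 ≠ 0 := by positivity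
  have hF : HasDerivAt
      (fun t => c0 * t *
        (Real.sinh (rD (t, x₂, a)) + rD (t, x₂, a) * Real.cosh (rD (t, x₂, a))))
      (c0 * 1 * (Real.sinh r + r * Real.cosh r) +
        c0 * x₁ * (Real.cosh r * (a⁻¹ * x₁ / Real.sinh r) +
          (a⁻¹ * x₁ / Real.sinh r * Real.cosh r +
            r * (Real.sinh r * (a⁻¹ * x₁ / Real.sinh r))))) x₁ :=
    ((hasDerivAt_id x₁).const_mul c0).mul hN
  have hdiv := hF.div hM hM0
  set S := Real.sinh r with hSdef
  set C := Real.cosh r with hCdef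
  set DD : ℝ := (((S + r * C) + x₁ * (C * (a⁻¹ * x₁ / S) +
      (a⁻¹ * x₁ / S * C + r * (S * (a⁻¹ * x₁ / S))))) * (r ^ 2 * S ^ 3) -
      x₁ * (S + r * C) * (2 * r ^ 1 * (a⁻¹ * x₁ / S) * S ^ 3 +
        r ^ 2 * (3 * S ^ 2 * (C * (a⁻¹ * x₁ / S))))) / (r ^ 2 * S ^ 3) ^ 2 with hDD
  refine ⟨c0 * DD, ?_, ?_⟩
  · refine hdiv.congr_deriv ?_
    rw [hDD, ← hrdef]
    push_cast
    ring
  · have hred : 2 * Real.pi ^ 2 * (a * (c0 * DD)) = -DD := by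
      have h1 : 2 * Real.pi ^ 2 * (a * (c0 * DD)) = (2 * Real.pi ^ 2 * (a * c0)) * DD := by
        ring
      have h2 : 2 * Real.pi ^ 2 * (a * c0) = -1 := by
        rw [hc0]; field_simp
      rw [h1, h2]; ring
    rw [hred, hDD]
    have hC2 : C ^ 2 = S ^ 2 + 1 := by rw [hCdef, hSdef]; exact Real.cosh_sq r
    field_simp
    linear_combination (x₁ ^ 2 * r ^ 2) * hC2
end
end

section
/- There exists a constant C > 0 such that for every x = (x₁,x₂,a) ∈ G with r(x) ≥ 1 one has |a ∂_{x₁} k₁(x)| ≤ C / (r(x) sinh² r(x)). -/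
open Real MeasureTheory Set

noncomputable section

lemma sq_sqrt' {u : ℝ} (hu : 1 ≤ u) : Real.sqrt (u ^ 2 - 1) ^ 2 = u ^ 2 - 1 :=
  Real.sq_sqrt (by nlinarith)

lemma exp_arcosh {u : ℝ} (hu : 1 ≤ u) :
    Real.exp (Real.log (u + Real.sqrt (u ^ 2 - 1))) = u + Real.sqrt (u ^ 2 - 1) := by
  apply Real.exp_log
  have := Real.sqrt_nonneg (u ^ 2 - 1); linarith

lemma inv_arcosh {u : ℝ} (hu : 1 ≤ u) :
    (u + Real.sqrt (u ^ 2 - 1))⁻¹ = u - Real.sqrt (u ^ 2 - 1) := by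
  have h := sq_sqrt' hu
  apply inv_eq_of_mul_eq_one_right
  nlinarith [h]

lemma cosh_arcosh {u : ℝ} (hu : 1 ≤ u) :
    Real.cosh (Real.log (u + Real.sqrt (u ^ 2 - 1))) = u := by
  rw [Real.cosh_eq, Real.exp_neg, _root_.exp_arcosh hu, inv_arcosh hu]; ring

lemma sinh_arcosh {u : ℝ} (hu : 1 ≤ u) :
    Real.sinh (Real.log (u + Real.sqrt (u ^ 2 - 1))) = Real.sqrt (u ^ 2 - 1) := by
  rw [Real.sinh_eq, Real.exp_neg, _root_.exp_arcosh hu, inv_arcosh hu]; ring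

lemma one_le_chD (x₁ x₂ a : ℝ) (ha : 0 < a) : 1 ≤ chD (x₁, x₂, a) := by
  have ha' : 0 < a⁻¹ := inv_pos.2 ha
  have h : a * a⁻¹ = 1 := mul_inv_cancel₀ ha.ne'
  simp only [chD]
  nlinarith [mul_nonneg ha'.le (sq_nonneg (a - 1)), mul_nonneg ha'.le (sq_nonneg x₁),
    mul_nonneg ha'.le (sq_nonneg x₂), sq_nonneg (a - 1)]

lemma hasDerivAt_chD_slice (x₂ a : ℝ) (x₁ : ℝ) :
    HasDerivAt (fun t => chD (t, x₂, a)) (a⁻¹ * x₁) x₁ := by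
  have h1 : HasDerivAt (fun t : ℝ => t ^ 2) (2 * x₁) x₁ := by
    simpa using hasDerivAt_pow 2 x₁
  have h2 : HasDerivAt (fun t : ℝ => (a + a⁻¹ + a⁻¹ * (t ^ 2 + x₂ ^ 2)) / 2)
      (a⁻¹ * (2 * x₁) / 2) x₁ :=
    (((h1.add_const (x₂ ^ 2)).const_mul a⁻¹).const_add (a + a⁻¹)).div_const 2
  have : a⁻¹ * (2 * x₁) / 2 = a⁻¹ * x₁ := by ring
  rw [this] at h2
  exact h2

lemma hasDerivAt_rD_slice (x₂ a : ℝ) (x₁ : ℝ) (hu : 1 < chD (x₁, x₂, a)) :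
    HasDerivAt (fun t => rD (t, x₂, a))
      (a⁻¹ * x₁ / Real.sqrt (chD (x₁, x₂, a) ^ 2 - 1)) x₁ := by
  set U := chD (x₁, x₂, a) with hU
  have hs0 : (0 : ℝ) < U ^ 2 - 1 := by nlinarith
  set s := Real.sqrt (U ^ 2 - 1) with hs
  have hsp : 0 < s := Real.sqrt_pos.2 hs0
  have hss : s ^ 2 = U ^ 2 - 1 := Real.sq_sqrt hs0.le
  have hc := hasDerivAt_chD_slice x₂ a x₁
  have h2 := (hc.pow 2).sub_const 1
  have h3 := h2.sqrt (show ((fun t => chD (t, x₂, a) ^ 2 - 1) x₁) ≠ 0 from hs0.ne')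
  have h4 := hc.add h3
  have hne : (fun x => chD (x, x₂, a) + Real.sqrt (chD (x, x₂, a) ^ 2 - 1)) x₁ ≠ 0 := by
    have := Real.sqrt_nonneg (U ^ 2 - 1)
    positivity
  have h5 := h4.log hne
  convert h5 using 1
  · rfl
  simp only [Pi.add_apply, Pi.pow_apply]
  rw [← hU, ← hs]
  have hUs : U + s ≠ 0 := by positivity
  norm_num
  rw [div_eq_div_iff hsp.ne' hUs, add_mul, div_mul_eq_mul_div]
  rw [show 2 * U * (a⁻¹ * x₁) * s / (2 * s) = U * (a⁻¹ * x₁) * (2 * s) / (2 * s) by ring,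
    mul_div_cancel_right₀ _ (by positivity : (2:ℝ) * s ≠ 0)]
  ring

set_option maxHeartbeats 1000000

/-- the estimate `|a ∂_{x₁} k₁(x)| ≲ 1 / (r(x) sinh² r(x))` for `r(x) ≥ 1`. -/
theorem stmt2 :
    ∃ C : ℝ, 0 < C ∧ ∀ x₁ x₂ a : ℝ, 0 < a → 1 ≤ rD (x₁, x₂, a) →
      |a * deriv (fun t => k1 (t, x₂, a)) x₁| ≤
        C / (rD (x₁, x₂, a) * Real.sinh (rD (x₁, x₂, a)) ^ 2) := by
  refine ⟨119, by norm_num, ?_⟩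
  intro x₁ x₂ a ha hr
  have ha' : 0 < a⁻¹ := inv_pos.2 ha
  have haa : a * a⁻¹ = 1 := mul_inv_cancel₀ ha.ne'
  set U := chD (x₁, x₂, a) with hUdef
  have hU1 : 1 ≤ U := one_le_chD x₁ x₂ a ha
  set r := rD (x₁, x₂, a) with hrdef
  have hcosh : Real.cosh r = U := _root_.cosh_arcosh hU1
  have hsinh : Real.sinh r = Real.sqrt (U ^ 2 - 1) := _root_.sinh_arcosh hU1
  set s := Real.sinh r with hsdef
  have hr1 : (1 : ℝ) ≤ r := hr
  have hrpos : (0 : ℝ) < r := lt_of_lt_of_le one_pos hr1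
  have hs1 : (1 : ℝ) ≤ s := by
    have := Real.self_lt_sinh_iff.2 hrpos
    rw [← hsdef] at this
    linarith
  have hspos : (0 : ℝ) < s := lt_of_lt_of_le one_pos hs1
  have hU_gt : 1 < U := by
    have h2 : 0 < Real.sqrt (U ^ 2 - 1) := by rw [← hsinh]; exact hspos
    have := Real.sqrt_pos.1 h2
    nlinarith
  have hcs : U ^ 2 = s ^ 2 + 1 := by
    rw [← hcosh, hsdef]; exact Real.cosh_sq r
  have hU2s : U ≤ 2 * s := by nlinarith
  have hsU : s ≤ U := by nlinarith [Real.sinh_lt_cosh r, hcosh, hsdef]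
  set q := a⁻¹ * x₁ ^ 2 with hqdef
  have hq0 : 0 ≤ q := by positivity
  have hq2U : q ≤ 2 * U := by
    have h2 : 2 * U = a + a⁻¹ + a⁻¹ * (x₁ ^ 2 + x₂ ^ 2) := by
      rw [hUdef]; simp only [chD]; ring
    nlinarith [mul_nonneg ha'.le (sq_nonneg x₂), ha.le]
  -- derivative of rD slice
  have hR : HasDerivAt (fun t => rD (t, x₂, a)) (a⁻¹ * x₁ / s) x₁ := by
    have h := hasDerivAt_rD_slice x₂ a x₁ (by rw [← hUdef]; exact hU_gt)
    rw [← hUdef, ← hsinh] at h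
    exact h
  set r' := a⁻¹ * x₁ / s with hr'def
  have hsinhD : HasDerivAt (fun t => Real.sinh (rD (t, x₂, a))) (U * r') x₁ := by
    have h := hR.sinh
    rw [← hrdef, hcosh] at h
    exact h
  have hcoshD : HasDerivAt (fun t => Real.cosh (rD (t, x₂, a))) (s * r') x₁ := by
    have h := hR.cosh
    rw [← hrdef, ← hsdef] at h
    exact h
  have hN : HasDerivAt
      (fun t => Real.sinh (rD (t, x₂, a)) + rD (t, x₂, a) * Real.cosh (rD (t, x₂, a)))
      (r' * (2 * U + r * s)) x₁ := by
    have h := hsinhD.add (hR.mul hcoshD)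
    rw [← hrdef, hcosh] at h
    refine h.congr_deriv ?_
    ring
  have hDfun : HasDerivAt
      (fun t => rD (t, x₂, a) ^ 2 * Real.sinh (rD (t, x₂, a)) ^ 3)
      (r' * (2 * r * s ^ 3 + 3 * r ^ 2 * s ^ 2 * U)) x₁ := by
    have h1 := hR.pow 2
    have h2 := hsinhD.pow 3
    have h := h1.mul h2
    rw [← hrdef, ← hsdef] at h
    refine h.congr_deriv ?_
    simp only [Pi.pow_apply, ← hrdef, ← hsdef]
    push_cast
    ring
  have hid : HasDerivAt (fun t : ℝ => -(2 * Real.pi ^ 2)⁻¹ * a⁻¹ * t)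
      (-(2 * Real.pi ^ 2)⁻¹ * a⁻¹) x₁ := by
    have h := (hasDerivAt_id x₁).const_mul (-(2 * Real.pi ^ 2)⁻¹ * a⁻¹)
    rw [mul_one] at h
    exact h
  have hTop := hid.mul hN
  rw [← hrdef, ← hsdef, hcosh] at hTop
  have hDne : (fun t => rD (t, x₂, a) ^ 2 * Real.sinh (rD (t, x₂, a)) ^ 3) x₁ ≠ 0 := by
    simp only
    rw [← hrdef, ← hsdef]
    positivity
  have hF := hTop.div hDfun hDne
  simp only [Pi.mul_apply] at hF
  rw [← hrdef, ← hsdef] at hF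
  have hfun : (fun t => k1 (t, x₂, a)) =
      (fun t => -(2 * Real.pi ^ 2)⁻¹ * a⁻¹ * t *
        (Real.sinh (rD (t, x₂, a)) + rD (t, x₂, a) * Real.cosh (rD (t, x₂, a))) /
        (rD (t, x₂, a) ^ 2 * Real.sinh (rD (t, x₂, a)) ^ 3)) := rfl
  rw [hfun, (show deriv (fun t => -(2 * Real.pi ^ 2)⁻¹ * a⁻¹ * t * (Real.sinh (rD (t, x₂, a)) + rD (t, x₂, a) * Real.cosh (rD (t, x₂, a))) / (rD (t, x₂, a) ^ 2 * Real.sinh (rD (t, x₂, a)) ^ 3)) x₁ = _ from hF.deriv), hcosh]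
  set E : ℝ := (s + r * U) * (r ^ 2 * s ^ 4) + q * ((2 * U + r * s) * (r ^ 2 * s ^ 3))
      - q * ((s + r * U) * (2 * r * s ^ 3 + 3 * r ^ 2 * s ^ 2 * U)) with hEdef
  have hval : a * (((-(2 * Real.pi ^ 2)⁻¹ * a⁻¹ * (s + r * U) +
        -(2 * Real.pi ^ 2)⁻¹ * a⁻¹ * x₁ * (r' * (2 * U + r * s))) * (r ^ 2 * s ^ 3) -
        -(2 * Real.pi ^ 2)⁻¹ * a⁻¹ * x₁ * (s + r * U) *
          (r' * (2 * r * s ^ 3 + 3 * r ^ 2 * s ^ 2 * U))) / (r ^ 2 * s ^ 3) ^ 2)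
      = -(2 * Real.pi ^ 2)⁻¹ * (E / (r ^ 4 * s ^ 7)) := by
    rw [hEdef, hr'def, hqdef]
    have hpi : Real.pi ≠ 0 := Real.pi_ne_zero
    field_simp
    ring
  rw [hval, abs_mul, abs_neg, abs_of_nonneg (by positivity : (0:ℝ) ≤ (2 * Real.pi ^ 2)⁻¹),
    abs_div, abs_of_pos (by positivity : (0:ℝ) < r ^ 4 * s ^ 7)]
  have hsrs : s ≤ r * s := le_mul_of_one_le_left hspos.le hr1
  have hrU : r * U ≤ r * (2 * s) := mul_le_mul_of_nonneg_left hU2s hrpos.le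
  have hN0b : s + r * U ≤ 3 * (r * s) := by linarith
  have hq4 : q ≤ 4 * s := by linarith
  have hX : 2 * U + r * s ≤ 5 * (r * s) := by linarith
  have hrr2 : r * s ^ 3 ≤ r ^ 2 * s ^ 3 := by
    have hr2 : r ≤ r ^ 2 := by nlinarith
    exact mul_le_mul_of_nonneg_right hr2 (by positivity)
  have hrsU : 3 * r ^ 2 * s ^ 2 * U ≤ 3 * r ^ 2 * s ^ 2 * (2 * s) :=
    mul_le_mul_of_nonneg_left hU2s (by positivity)
  have hY : 2 * r * s ^ 3 + 3 * r ^ 2 * s ^ 2 * U ≤ 8 * (r ^ 2 * s ^ 3) := by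
    nlinarith [hrr2, hrsU]
  have hU0 : (0:ℝ) ≤ U := by linarith
  have h1 : (s + r * U) * (r ^ 2 * s ^ 4) ≤ 3 * (r ^ 3 * s ^ 5) := by
    calc (s + r * U) * (r ^ 2 * s ^ 4) ≤ 3 * (r * s) * (r ^ 2 * s ^ 4) :=
          mul_le_mul_of_nonneg_right hN0b (by positivity)
      _ = 3 * (r ^ 3 * s ^ 5) := by ring
  have h2 : q * ((2 * U + r * s) * (r ^ 2 * s ^ 3)) ≤ 20 * (r ^ 3 * s ^ 5) := by
    calc q * ((2 * U + r * s) * (r ^ 2 * s ^ 3))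
        ≤ (4 * s) * ((5 * (r * s)) * (r ^ 2 * s ^ 3)) :=
          mul_le_mul hq4 (mul_le_mul_of_nonneg_right hX (by positivity))
            (mul_nonneg (by linarith) (by positivity)) (by positivity)
      _ = 20 * (r ^ 3 * s ^ 5) := by ring
  have h3 : q * ((s + r * U) * (2 * r * s ^ 3 + 3 * r ^ 2 * s ^ 2 * U)) ≤ 96 * (r ^ 3 * s ^ 5) := by
    calc q * ((s + r * U) * (2 * r * s ^ 3 + 3 * r ^ 2 * s ^ 2 * U))
        ≤ (4 * s) * ((3 * (r * s)) * (8 * (r ^ 2 * s ^ 3))) :=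
          mul_le_mul hq4
            (mul_le_mul hN0b hY (by positivity) (by positivity))
            (mul_nonneg (by positivity) (by positivity)) (by positivity)
      _ = 96 * (r ^ 3 * s ^ 5) := by ring
  have h1' : (0:ℝ) ≤ (s + r * U) * (r ^ 2 * s ^ 4) :=
    mul_nonneg (by linarith [mul_nonneg hrpos.le hU0]) (by positivity)
  have h2' : (0:ℝ) ≤ q * ((2 * U + r * s) * (r ^ 2 * s ^ 3)) :=
    mul_nonneg hq0 (mul_nonneg (by linarith) (by positivity))
  have h3' : (0:ℝ) ≤ q * ((s + r * U) * (2 * r * s ^ 3 + 3 * r ^ 2 * s ^ 2 * U)) :=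
    mul_nonneg hq0 (mul_nonneg (by linarith [mul_nonneg hrpos.le hU0])
      (by nlinarith [mul_nonneg (mul_nonneg (sq_nonneg r) (sq_nonneg s)) hU0]))
  have hEabs : |E| ≤ 119 * (r ^ 3 * s ^ 5) := by
    rw [abs_le, hEdef]
    constructor <;> linarith
  have h2pi : (1:ℝ) ≤ 2 * Real.pi ^ 2 := by nlinarith [Real.pi_gt_three]
  have hinv : (2 * Real.pi ^ 2)⁻¹ ≤ 1 := inv_le_one_of_one_le₀ h2pi
  calc (2 * Real.pi ^ 2)⁻¹ * (|E| / (r ^ 4 * s ^ 7))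
      ≤ 1 * (|E| / (r ^ 4 * s ^ 7)) :=
        mul_le_mul_of_nonneg_right hinv (by positivity)
    _ = |E| / (r ^ 4 * s ^ 7) := one_mul _
    _ ≤ (119 * (r ^ 3 * s ^ 5)) / (r ^ 4 * s ^ 7) := by gcongr
    _ = 119 / (r * s ^ 2) := by
        rw [div_eq_div_iff (by positivity) (by positivity)]; ring
end
end

section
/- There exists a constant C > 0 such that for every x = (x₁,x₂,a) ∈ G with x ∉ 2P₀ and every y ∈ P₀ one has |k₁(y⁻¹x)| ≤ C a⁻¹ (1+|x|)/(r(x) sinh² r(x)). -/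
open Real MeasureTheory Set

noncomputable section

lemma arcosh_basic {c : ℝ} (hc : 1 ≤ c) :
    Real.cosh (Real.log (c + Real.sqrt (c^2 - 1))) = c ∧
    Real.sinh (Real.log (c + Real.sqrt (c^2 - 1))) = Real.sqrt (c^2 - 1) := by
  have h0 : (0:ℝ) ≤ c^2 - 1 := by nlinarith
  have hs0 : 0 ≤ Real.sqrt (c^2-1) := Real.sqrt_nonneg _
  have hs2 : Real.sqrt (c^2-1)^2 = c^2 - 1 := Real.sq_sqrt h0
  have hpos : 0 < c + Real.sqrt (c^2-1) := by linarith
  have hinv : (c + Real.sqrt (c^2-1))⁻¹ = c - Real.sqrt (c^2-1) := by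
    have hmul : (c + Real.sqrt (c^2-1)) * (c - Real.sqrt (c^2-1)) = 1 := by nlinarith
    exact inv_eq_of_mul_eq_one_right hmul
  constructor
  · rw [Real.cosh_eq, Real.exp_neg, Real.exp_log hpos, hinv]; ring
  · rw [Real.sinh_eq, Real.exp_neg, Real.exp_log hpos, hinv]; ring

lemma eb1l : (0.367:ℝ) ≤ Real.exp (-1) := by
  rw [Real.exp_neg, le_inv_comm₀ (by norm_num) (Real.exp_pos 1)]
  calc Real.exp 1 ≤ 2.7182818286 := Real.exp_one_lt_d9.le
    _ ≤ (0.367:ℝ)⁻¹ := by norm_num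

lemma eb1u : Real.exp 1 ≤ 2.719 := le_trans Real.exp_one_lt_d9.le (by norm_num)

lemma eb2l : (7.389:ℝ) ≤ Real.exp 2 := by
  have h := Real.exp_one_gt_d9.le
  have h2 : Real.exp 2 = Real.exp 1 * Real.exp 1 := by rw [← Real.exp_add]; norm_num
  nlinarith [Real.exp_pos 1]

lemma eb2u : Real.exp 2 ≤ 7.39 := by
  have h := Real.exp_one_lt_d9.le
  have h2 : Real.exp 2 = Real.exp 1 * Real.exp 1 := by rw [← Real.exp_add]; norm_num
  nlinarith [Real.exp_pos 1]

lemma eb2inv : Real.exp (-2) ≤ 0.1354 := by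
  rw [Real.exp_neg, inv_le_comm₀ (Real.exp_pos 2) (by norm_num)]
  calc (0.1354:ℝ)⁻¹ ≤ 7.389 := by norm_num
    _ ≤ Real.exp 2 := eb2l

lemma eb5inv : Real.exp (-5) ≤ 0.007 := by
  rw [Real.exp_neg, inv_le_comm₀ (Real.exp_pos 5) (by norm_num)]
  have h1 : (2.7:ℝ) ≤ Real.exp 1 := le_trans (by norm_num) Real.exp_one_gt_d9.le
  have h5 : Real.exp 5 = Real.exp 1 * Real.exp 1 * Real.exp 1 * Real.exp 1 * Real.exp 1 := by
    rw [← Real.exp_add, ← Real.exp_add, ← Real.exp_add, ← Real.exp_add]; norm_num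
  have h2 : (2.7:ℝ)*2.7*2.7*2.7*2.7 ≤ Real.exp 5 := by
    rw [h5]; have := Real.exp_pos 1; gcongr <;> norm_num
  linarith [h2]

lemma core_compare (a y1 y2 y3 x1 x2 : ℝ) (ha : 0 < a)
    (h3l : (0.367:ℝ) ≤ y3) (h3u : y3 ≤ 2.719) (h1 : y1^2 ≤ 1) (h2 : y2^2 ≤ 1) :
    y3*(a^2 + 1 + (x1^2+x2^2)) ≤ 25*(a^2 + y3^2 + ((x1-y1)^2 + (x2-y2)^2)) := by
  rcases le_or_gt (x1^2+x2^2) 8 with hS | hS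
  · nlinarith [sq_nonneg (x1-y1), sq_nonneg (x2-y2), sq_nonneg a, sq_nonneg x1, sq_nonneg x2,
      mul_nonneg (le_trans (by norm_num) h3l : (0:ℝ) ≤ y3) (sq_nonneg a)]
  · nlinarith [sq_nonneg (x1-2*y1), sq_nonneg (x2-2*y2), sq_nonneg a, sq_nonneg (x1+x2), sq_nonneg (x1-x2)]

lemma core_lower (a y3 T ε : ℝ) (ha : 0 < a)
    (h3l : (0.367:ℝ) ≤ y3) (h3u : y3 ≤ 2.719) (hT : 0 ≤ T) (hε0 : 0 ≤ ε) (hε : ε ≤ 0.007)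
    (hcase : 7.389 ≤ a ∨ a ≤ 0.1354 ∨ (a ≤ 7.39 ∧ 1 ≤ T)) :
    (2 + ε) * (a * y3) ≤ a^2 + y3^2 + T := by
  rcases hcase with h | h | ⟨hu, hT1⟩
  · have key : 0 ≤ a * (a - (2+ε)*y3) := by
      apply mul_nonneg ha.le; nlinarith
    nlinarith [sq_nonneg y3]
  · have key : 0 ≤ y3 * (y3 - (2+ε)*a) := by
      apply mul_nonneg (by linarith); nlinarith
    nlinarith [sq_nonneg a]
  · nlinarith [sq_nonneg (a - y3), mul_pos ha (lt_of_lt_of_le (by norm_num) h3l),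
      mul_nonneg ha.le (le_trans (by norm_num) h3l : (0:ℝ) ≤ y3)]


lemma sq_lb {c : ℝ} (h : 1 ≤ c) : 0 ≤ c^2 - 1 := by nlinarith

lemma sq_gt {c : ℝ} (h : 1 < c) : 0 < c^2 - 1 := by nlinarith

lemma eps_sq {c ε : ℝ} (hε : 0 ≤ ε) (h : 1 + ε/2 ≤ c) : ε ≤ c^2 - 1 := by nlinarith

lemma cp_sq_le {c : ℝ} (h : Real.exp (-5) ≤ c^2 - 1) :
    c^2 ≤ (1 + Real.exp 5) * (c^2 - 1) := by
  have hee : Real.exp 5 * Real.exp (-5) = 1 := by rw [← Real.exp_add]; norm_num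
  nlinarith [mul_le_mul_of_nonneg_left h (Real.exp_pos 5).le]

lemma cx_lower {a S : ℝ} (hS : 0 ≤ S)
    (hcase : 7.389 ≤ a ∨ a ≤ 0.1354 ∨ 1 ≤ S) : 2*a < a^2 + 1 + S := by
  rcases hcase with h | h | h <;> nlinarith [sq_nonneg (a-1)]

set_option maxHeartbeats 2000000 in
/-- `|k₁(y⁻¹x)| ≲ a⁻¹ (1+|x|)/(r(x) sinh² r(x))` for `x ∉ 2P₀`, `y ∈ P₀`. -/
theorem stmt5 :
    ∃ C : ℝ, 0 < C ∧ ∀ x y : ℝ × ℝ × ℝ, 0 < x.2.2 → x ∉ twoP0 → y ∈ P0 →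
      |k1 (ginvMul y x)| ≤
        C * (x.2.2)⁻¹ * (1 + nm x) / (rD x * Real.sinh (rD x) ^ 2) := by
  have hR0 : 0 < Real.log (1 + Real.exp (-5) / 2) :=
    Real.log_pos (by have := Real.exp_pos (-5); linarith)
  set R0 := Real.log (1 + Real.exp (-5) / 2) with hR0def
  have hK3 : 0 < Real.sqrt (1 + Real.exp 5) := Real.sqrt_pos.mpr (by positivity)
  set K3 := Real.sqrt (1 + Real.exp 5) with hK3def
  have hlog50 : 0 ≤ Real.log 50 := Real.log_nonneg (by norm_num)
  have hK1 : 0 < 1 + Real.log 50 / R0 := by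
    have : 0 ≤ Real.log 50 / R0 := div_nonneg hlog50 hR0.le
    linarith
  have hK4 : 0 < 1 + 1 / R0 := by
    have : 0 < 1 / R0 := by positivity
    linarith
  refine ⟨625 * (1 + Real.log 50 / R0) * (1 + 1 / R0) * K3 ^ 3 / (2 * Real.pi ^ 2), ?_, ?_⟩
  · apply div_pos
    · exact mul_pos (mul_pos (mul_pos (by norm_num) hK1) hK4) (pow_pos hK3 3)
    · positivity
  rintro ⟨x1, x2, a⟩ ⟨y1, y2, y3⟩ hax hx2 hyP
  have ha : 0 < a := hax
  simp only [P0, mem_setOf_eq, mem_Icc] at hyP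
  obtain ⟨⟨hy1l, hy1u⟩, ⟨hy2l, hy2u⟩, hy3l0, hy3u0⟩ := hyP
  have hy3l : (0.367:ℝ) ≤ y3 := le_trans eb1l hy3l0
  have hy3u : y3 ≤ 2.719 := le_trans hy3u0 eb1u
  have hy3p : 0 < y3 := lt_of_lt_of_le (by norm_num) hy3l
  -- case analysis from x ∉ 2P₀
  have hbig : 7.389 ≤ a ∨ a ≤ 0.1354 ∨
      (a ≤ 7.39 ∧ 1 ≤ (x1-y1)^2 + (x2-y2)^2 ∧ 1 ≤ x1^2 + x2^2) := by
    rcases lt_or_ge (Real.exp 2) a with hA | hA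
    · left; linarith [eb2l]
    rcases lt_or_ge a (Real.exp (-2)) with hB | hB
    · right; left; linarith [eb2inv]
    right; right
    refine ⟨le_trans hA eb2u, ?_⟩
    have hx12 : 2 < |x1| ∨ 2 < |x2| := by
      by_contra hcon
      push_neg at hcon
      obtain ⟨h1, h2⟩ := hcon
      rw [abs_le] at h1 h2
      exact hx2 ⟨mem_Icc.mpr ⟨h1.1, h1.2⟩, mem_Icc.mpr ⟨h2.1, h2.2⟩, mem_Icc.mpr ⟨hB, hA⟩⟩
    have key : ∀ u v : ℝ, (1 ≤ u - v ∨ 1 ≤ v - u) → 1 ≤ (u - v)^2 := by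
      intro u v h
      rcases h with h | h <;> nlinarith
    rcases hx12 with h | h
    · rcases lt_abs.mp h with h' | h'
      · have k1' := key x1 y1 (Or.inl (by linarith))
        constructor
        · nlinarith [sq_nonneg (x2-y2)]
        · nlinarith [sq_nonneg x2]
      · have k1' := key x1 y1 (Or.inr (by linarith))
        constructor
        · nlinarith [sq_nonneg (x2-y2)]
        · nlinarith [sq_nonneg x2]
    · rcases lt_abs.mp h with h' | h'
      · have k1' := key x2 y2 (Or.inl (by linarith))
        constructor
        · nlinarith [sq_nonneg (x1-y1)]
        · nlinarith [sq_nonneg x1]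
      · have k1' := key x2 y2 (Or.inr (by linarith))
        constructor
        · nlinarith [sq_nonneg (x1-y1)]
        · nlinarith [sq_nonneg x1]
  have hT0 : (0:ℝ) ≤ (x1-y1)^2 + (x2-y2)^2 := by positivity
  have hy1sq : y1^2 ≤ 1 := by nlinarith
  have hy2sq : y2^2 ≤ 1 := by nlinarith
  have hcompare := core_compare a y1 y2 y3 x1 x2 ha hy3l hy3u hy1sq hy2sq
  have hmain := core_lower a y3 ((x1-y1)^2 + (x2-y2)^2) (Real.exp (-5)) ha hy3l hy3u hT0
    (Real.exp_pos (-5)).le eb5inv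
    (by rcases hbig with h | h | ⟨h1, h2, _⟩
        · exact Or.inl h
        · exact Or.inr (Or.inl h)
        · exact Or.inr (Or.inr ⟨h1, h2⟩))
  have hcx1 : 2*a < a^2 + 1 + (x1^2 + x2^2) := by
    apply cx_lower (by positivity)
    rcases hbig with h | h | ⟨_, _, hS⟩
    · exact Or.inl h
    · exact Or.inr (Or.inl h)
    · exact Or.inr (Or.inr hS)
  -- values of chD
  have hchp : chD (ginvMul (y1,y2,y3) (x1,x2,a)) =
      (a^2 + y3^2 + ((x1-y1)^2 + (x2-y2)^2))/(2*(a*y3)) := by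
    simp only [chD, ginvMul]; field_simp
  have hchx : chD (x1,x2,a) = (a^2 + 1 + (x1^2+x2^2))/(2*a) := by
    simp only [chD]; field_simp
  set cp := chD (ginvMul (y1,y2,y3) (x1,x2,a)) with hcpdef
  set cx := chD (x1,x2,a) with hcxdef
  have hcp1 : 1 + Real.exp (-5)/2 ≤ cp := by
    rw [hchp, le_div_iff₀ (by positivity)]
    linarith [hmain]
  have hcx_gt : 1 < cx := by
    rw [hchx, lt_div_iff₀ (by positivity)]
    linarith [hcx1]
  have hcp_pos : 0 < cp := by linarith [hcp1, Real.exp_pos (-5)]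
  have hcx_pos : 0 < cx := by linarith
  have h1cp : 1 ≤ cp := by linarith [hcp1, Real.exp_pos (-5)]
  have hccomp : cx ≤ 25 * cp := by
    rw [hchx, hchp, show (25:ℝ) * ((a^2 + y3^2 + ((x1-y1)^2 + (x2-y2)^2))/(2*(a*y3)))
        = (25*(a^2 + y3^2 + ((x1-y1)^2 + (x2-y2)^2)))/(2*(a*y3)) from by ring,
      div_le_div_iff₀ (by positivity) (by positivity)]
    linarith [mul_le_mul_of_nonneg_left hcompare (by positivity : (0:ℝ) ≤ 2*a)]
  -- arcosh values
  set A := Real.sqrt (cp^2 - 1) with hAdef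
  set sr := Real.sqrt (cx^2 - 1) with hsrdef
  set R := rD (ginvMul (y1,y2,y3) (x1,x2,a)) with hRdef
  set r := rD (x1,x2,a) with hrdef
  have hRform : R = Real.log (cp + A) := rfl
  have hrform : r = Real.log (cx + sr) := rfl
  have hcosp : Real.cosh R = cp := (arcosh_basic h1cp).1
  have hsinp : Real.sinh R = A := (arcosh_basic h1cp).2
  have hsinx : Real.sinh r = sr := (arcosh_basic hcx_gt.le).2
  have hA2 : A^2 = cp^2 - 1 := Real.sq_sqrt (sq_lb h1cp)
  have hcp_gt : 1 < cp := by linarith [hcp1, Real.exp_pos (-5)]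
  have hApos : 0 < A := Real.sqrt_pos.mpr (sq_gt hcp_gt)
  have hsrpos : 0 < sr := Real.sqrt_pos.mpr (sq_gt hcx_gt)
  have hsr0 : 0 ≤ sr := hsrpos.le
  have hRlb : R0 ≤ R := by
    rw [hRform, hR0def]
    apply Real.log_le_log (by positivity)
    linarith [Real.sqrt_nonneg (cp^2-1)]
  have hRpos : 0 < R := lt_of_lt_of_le hR0 hRlb
  have hrpos : 0 < r := by
    rw [hrform]
    apply Real.log_pos
    linarith [Real.sqrt_nonneg (cx^2-1)]
  have hsrcx : sr ≤ cx := by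
    rw [hsrdef]
    calc Real.sqrt (cx^2-1) ≤ Real.sqrt (cx^2) := Real.sqrt_le_sqrt (by linarith)
      _ = cx := Real.sqrt_sq hcx_pos.le
  have hAcp : A ≤ cp := by
    rw [hAdef]
    calc Real.sqrt (cp^2-1) ≤ Real.sqrt (cp^2) := Real.sqrt_le_sqrt (by linarith)
      _ = cp := Real.sqrt_sq hcp_pos.le
  have hcpA : cp ≤ K3 * A := by
    have hee : Real.exp 5 * Real.exp (-5) = 1 := by rw [← Real.exp_add]; norm_num
    have h2 : Real.exp (-5) ≤ cp^2 - 1 := eps_sq (Real.exp_pos (-5)).le hcp1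
    have h1 : cp^2 ≤ (1 + Real.exp 5) * A^2 := by
      rw [hA2]; exact cp_sq_le h2
    calc cp = Real.sqrt (cp^2) := (Real.sqrt_sq hcp_pos.le).symm
      _ ≤ Real.sqrt ((1 + Real.exp 5) * A^2) := Real.sqrt_le_sqrt h1
      _ = K3 * A := by rw [Real.sqrt_mul (by positivity), Real.sqrt_sq hApos.le, hK3def]
  have hrupper : r ≤ (1 + Real.log 50 / R0) * R := by
    have e1 : r ≤ Real.log (2*cx) := by
      rw [hrform]
      exact Real.log_le_log (by linarith [Real.sqrt_nonneg (cx^2-1)]) (by linarith [hsrcx])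
    have e2 : Real.log (2*cx) ≤ Real.log (50*cp) :=
      Real.log_le_log (by linarith) (by linarith [hccomp])
    have e3 : Real.log (50*cp) = Real.log 50 + Real.log cp :=
      Real.log_mul (by norm_num) (ne_of_gt hcp_pos)
    have e4 : Real.log cp ≤ R := by
      rw [hRform]
      exact Real.log_le_log hcp_pos (by linarith [Real.sqrt_nonneg (cp^2-1)])
    have e5 : Real.log 50 ≤ Real.log 50 / R0 * R := by
      rw [div_mul_eq_mul_div, le_div_iff₀ hR0]
      exact mul_le_mul_of_nonneg_left hRlb hlog50
    have e6 : (1 + Real.log 50 / R0) * R = R + Real.log 50 / R0 * R := by ring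
    linarith [e1, e2, e3, e4, e5]
  have hN2 : A + R * cp ≤ (1 + 1/R0) * R * cp := by
    have h6 : 1 ≤ 1/R0 * R := by
      rw [one_div, inv_mul_eq_div, le_div_iff₀ hR0, one_mul]
      exact hRlb
    have h7 : cp ≤ (1/R0 * R) * cp := le_mul_of_one_le_left hcp_pos.le h6
    have h8 : (1 + 1/R0) * R * cp = R * cp + (1/R0 * R) * cp := by ring
    linarith [hAcp, h7, h8]
  -- k1 value
  have hg1 : (ginvMul (y1,y2,y3) (x1,x2,a)).1 = y3⁻¹ * (x1 - y1) := rfl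
  have hg3 : (ginvMul (y1,y2,y3) (x1,x2,a)).2.2 = a / y3 := rfl
  have hk : k1 (ginvMul (y1,y2,y3) (x1,x2,a)) =
      -((2*Real.pi^2)⁻¹ * ((x1-y1)/a) * ((A + R*cp)/(R^2*A^3))) := by
    simp only [k1, ← hRdef, hg1, hg3, hsinp, hcosp]
    have hpi := Real.pi_ne_zero
    field_simp
  have hw : 0 < (A + R*cp)/(R^2*A^3) :=
    div_pos (by linarith [hApos, mul_pos hRpos hcp_pos])
      (mul_pos (pow_pos hRpos 2) (pow_pos hApos 3))
  have habs : |k1 (ginvMul (y1,y2,y3) (x1,x2,a))| =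
      (2*Real.pi^2)⁻¹ * (|x1-y1|/a) * ((A + R*cp)/(R^2*A^3)) := by
    rw [hk, abs_neg, abs_mul, abs_mul, abs_of_nonneg (by positivity : (0:ℝ) ≤ (2*Real.pi^2)⁻¹),
      abs_of_pos hw, abs_div, abs_of_pos ha]
  -- the main fraction inequality
  have hsrA : sr ≤ 25*(K3*A) := by
    calc sr ≤ cx := hsrcx
      _ ≤ 25*cp := hccomp
      _ ≤ 25*(K3*A) := by linarith [hcpA]
  have hfrac : (2*Real.pi^2)⁻¹ * ((A + R*cp)/(R^2*A^3)) ≤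
      625 * (1 + Real.log 50 / R0) * (1 + 1 / R0) * K3 ^ 3 / (2 * Real.pi ^ 2) / (r * sr^2) := by
    have hD : 0 < R^2*A^3 := mul_pos (pow_pos hRpos 2) (pow_pos hApos 3)
    have hd : 0 < r*sr^2 := mul_pos hrpos (pow_pos hsrpos 2)
    rw [show (2*Real.pi^2)⁻¹ * ((A + R*cp)/(R^2*A^3))
        = ((2*Real.pi^2)⁻¹ * (A + R*cp))/(R^2*A^3) from by ring,
      div_le_div_iff₀ hD hd]
    have m1 : (A + R*cp) * (r * sr^2) ≤
        ((1 + 1/R0)*R*cp) * (((1 + Real.log 50/R0)*R) * (25*(K3*A))^2) := by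
      apply mul_le_mul hN2
      · apply mul_le_mul hrupper (pow_le_pow_left₀ hsr0 hsrA 2) (by positivity)
          (mul_nonneg hK1.le hRpos.le)
      · positivity
      · exact mul_nonneg (mul_nonneg hK4.le hRpos.le) hcp_pos.le
    have m2 : ((1 + 1/R0)*R*cp) * (((1 + Real.log 50/R0)*R) * (25*(K3*A))^2) ≤
        ((1 + 1/R0)*R*(K3*A)) * (((1 + Real.log 50/R0)*R) * (25*(K3*A))^2) := by
      apply mul_le_mul_of_nonneg_right
      · exact mul_le_mul_of_nonneg_left hcpA (mul_nonneg hK4.le hRpos.le)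
      · apply mul_nonneg (mul_nonneg hK1.le hRpos.le)
        positivity
    calc (2*Real.pi^2)⁻¹ * (A + R*cp) * (r*sr^2)
        = (2*Real.pi^2)⁻¹ * ((A + R*cp) * (r*sr^2)) := by ring
      _ ≤ (2*Real.pi^2)⁻¹ * (((1 + 1/R0)*R*(K3*A)) * (((1 + Real.log 50/R0)*R) * (25*(K3*A))^2)) :=
          mul_le_mul_of_nonneg_left (le_trans m1 m2) (by positivity)
      _ = 625 * (1 + Real.log 50 / R0) * (1 + 1 / R0) * K3 ^ 3 / (2 * Real.pi ^ 2) * (R^2*A^3) := by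
          ring
  -- numerator bound
  have hnm0 : (0:ℝ) ≤ nm (x1,x2,a) := Real.sqrt_nonneg _
  have hx1nm : |x1| ≤ nm (x1,x2,a) := by
    rw [show nm (x1,x2,a) = Real.sqrt (x1^2 + x2^2) from rfl]
    calc |x1| = Real.sqrt (x1^2) := (Real.sqrt_sq_eq_abs x1).symm
      _ ≤ Real.sqrt (x1^2 + x2^2) := Real.sqrt_le_sqrt (by linarith [sq_nonneg x2])
  have hnum : |x1 - y1|/a ≤ (1 + nm (x1,x2,a))/a := by
    rw [div_le_div_iff_of_pos_right ha]
    have h1 := abs_add_le x1 (-y1)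
    rw [abs_neg] at h1
    have h2 : |y1| ≤ 1 := abs_le.mpr ⟨hy1l, hy1u⟩
    calc |x1 - y1| = |x1 + -y1| := by ring_nf
      _ ≤ |x1| + |y1| := h1
      _ ≤ 1 + nm (x1,x2,a) := by linarith [hx1nm]
  rw [hsinx]
  calc |k1 (ginvMul (y1,y2,y3) (x1,x2,a))|
      = (2*Real.pi^2)⁻¹ * (|x1-y1|/a) * ((A + R*cp)/(R^2*A^3)) := habs
    _ = (|x1-y1|/a) * ((2*Real.pi^2)⁻¹ * ((A + R*cp)/(R^2*A^3))) := by ring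
    _ ≤ ((1 + nm (x1,x2,a))/a) *
        (625 * (1 + Real.log 50 / R0) * (1 + 1 / R0) * K3 ^ 3 / (2 * Real.pi ^ 2) / (r * sr^2)) :=
        mul_le_mul hnum hfrac (mul_nonneg (by positivity) hw.le)
          (div_nonneg (by linarith [hnm0]) ha.le)
    _ = 625 * (1 + Real.log 50 / R0) * (1 + 1 / R0) * K3 ^ 3 / (2 * Real.pi ^ 2) *
        a⁻¹ * (1 + nm (x1,x2,a)) / (r * sr^2) := by ring
end
end

section
/- There exists a constant C > 0 such that for every x = (x₁,x₂,a) ∈ G with x ∉ 2P₀ and every y ∈ P₀ one has |k₀(y⁻¹x)| ≤ C ( 1/(r(x) sinh² r(x)) + a⁻¹/(r(x)² sinh r(x)) ). -/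
open Real MeasureTheory Set

noncomputable section

set_option maxHeartbeats 1000000

private lemma trig_facts6 {u : ℝ} (hu : 1 ≤ u) :
    Real.exp (Real.log (u + Real.sqrt (u ^ 2 - 1))) = u + Real.sqrt (u ^ 2 - 1) ∧
      Real.cosh (Real.log (u + Real.sqrt (u ^ 2 - 1))) = u ∧
        Real.sinh (Real.log (u + Real.sqrt (u ^ 2 - 1))) = Real.sqrt (u ^ 2 - 1) := by
  have h1 : (0:ℝ) ≤ u ^ 2 - 1 := by nlinarith
  have hs0 : 0 ≤ Real.sqrt (u ^ 2 - 1) := Real.sqrt_nonneg _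
  have hs2 : Real.sqrt (u ^ 2 - 1) ^ 2 = u ^ 2 - 1 := Real.sq_sqrt h1
  have hpos : 0 < u + Real.sqrt (u ^ 2 - 1) := by linarith
  have hmul : (u + Real.sqrt (u ^ 2 - 1)) * (u - Real.sqrt (u ^ 2 - 1)) = 1 := by nlinarith
  have hinv : (u + Real.sqrt (u ^ 2 - 1))⁻¹ = u - Real.sqrt (u ^ 2 - 1) :=
    inv_eq_of_mul_eq_one_right hmul
  refine ⟨Real.exp_log hpos, ?_, ?_⟩
  · rw [Real.cosh_log hpos, hinv]; ring
  · rw [Real.sinh_log hpos, hinv]; ring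

private lemma L1aux6 {a b x1 x2 y1 y2 : ℝ} (ha : 0 < a) (hb0 : 0 < b)
    (hbU : b ≤ 2.72) (hbL : (0.36:ℝ) ≤ b)
    (hy1l : -1 ≤ y1) (hy1u : y1 ≤ 1) (hy2l : -1 ≤ y2) (hy2u : y2 ≤ 1)
    (hlt : a ^ 2 + b ^ 2 + (x1 - y1) ^ 2 + (x2 - y2) ^ 2 < 2.02 * (a * b)) :
    (0.3 ≤ a ∧ a ≤ 3.2) ∧ (-2 ≤ x1 ∧ x1 ≤ 2) ∧ (-2 ≤ x2 ∧ x2 ≤ 2) := by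
  have htup : a ≤ 1.16 * b := by
    nlinarith [sq_nonneg (a - 1.16 * b), sq_nonneg (x1 - y1), sq_nonneg (x2 - y2)]
  have htlo : 0.85 * b ≤ a := by
    nlinarith [sq_nonneg (a - 0.85 * b), sq_nonneg (x1 - y1), sq_nonneg (x2 - y2)]
  have hab : a * b ≤ 1.16 * b * b := mul_le_mul_of_nonneg_right htup hb0.le
  have hd1 : (x1 - y1) ^ 2 < 0.18 := by
    nlinarith [sq_nonneg (a - b), sq_nonneg (x2 - y2)]
  have hd2 : (x2 - y2) ^ 2 < 0.18 := by
    nlinarith [sq_nonneg (a - b), sq_nonneg (x1 - y1)]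
  refine ⟨⟨by nlinarith, by nlinarith⟩,
    ⟨by nlinarith [sq_nonneg (x1 - y1 + 1)], by nlinarith [sq_nonneg (x1 - y1 - 1)]⟩,
    ⟨by nlinarith [sq_nonneg (x2 - y2 + 1)], by nlinarith [sq_nonneg (x2 - y2 - 1)]⟩⟩

private lemma L2aux6 {a b x1 x2 y1 y2 : ℝ} (hb0 : 0 < b)
    (hbU : b ≤ 2.72) (hbL : (0.36:ℝ) ≤ b)
    (hy1l : -1 ≤ y1) (hy1u : y1 ≤ 1) (hy2l : -1 ≤ y2) (hy2u : y2 ≤ 1) :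
    b * (a ^ 2 + 1 + x1 ^ 2 + x2 ^ 2) ≤
      28 * (a ^ 2 + b ^ 2 + (x1 - y1) ^ 2 + (x2 - y2) ^ 2) := by
  have hX1 : b * x1 ^ 2 ≤ 5.44 * (x1 - y1) ^ 2 + 2 * b := by
    nlinarith [mul_nonneg hb0.le (sq_nonneg (x1 - 2 * y1)),
      mul_nonneg (by linarith : (0:ℝ) ≤ 2.72 - b) (sq_nonneg (x1 - y1)),
      mul_nonneg hb0.le (by nlinarith : (0:ℝ) ≤ 1 - y1 ^ 2)]
  have hX2 : b * x2 ^ 2 ≤ 5.44 * (x2 - y2) ^ 2 + 2 * b := by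
    nlinarith [mul_nonneg hb0.le (sq_nonneg (x2 - 2 * y2)),
      mul_nonneg (by linarith : (0:ℝ) ≤ 2.72 - b) (sq_nonneg (x2 - y2)),
      mul_nonneg hb0.le (by nlinarith : (0:ℝ) ≤ 1 - y2 ^ 2)]
  nlinarith [sq_nonneg a, mul_nonneg (by linarith : (0:ℝ) ≤ 28 * b - 5) hb0.le,
    sq_nonneg (x1 - y1), sq_nonneg (x2 - y2)]

private lemma exp41aux6 : (56:ℝ) ≤ Real.exp 4.1 := by
  have hE1 : (2.7182818283:ℝ) < Real.exp 1 := Real.exp_one_gt_d9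
  have h41 : Real.exp 4.1 = Real.exp 1 * Real.exp 1 * Real.exp 1 * Real.exp 1 * Real.exp 0.1 := by
    rw [← Real.exp_add, ← Real.exp_add, ← Real.exp_add, ← Real.exp_add]; norm_num
  have hee : (7.389:ℝ) ≤ Real.exp 1 * Real.exp 1 := by nlinarith
  have he4 : (54.59:ℝ) ≤ Real.exp 1 * Real.exp 1 * (Real.exp 1 * Real.exp 1) := by nlinarith
  have h01 : (1.1:ℝ) ≤ Real.exp 0.1 := by nlinarith [Real.add_one_le_exp (0.1:ℝ)]
  rw [h41]; nlinarith [Real.exp_pos (0.1:ℝ)]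

private lemma exp013aux6 : Real.exp (0.13:ℝ) ≤ 1.15 := by
  have h87 : (0.87:ℝ) ≤ Real.exp (-0.13) := by nlinarith [Real.add_one_le_exp (-0.13:ℝ)]
  have hprod : Real.exp (0.13:ℝ) * Real.exp (-0.13) = 1 := by rw [← Real.exp_add]; norm_num
  nlinarith [Real.exp_pos (0.13:ℝ), Real.exp_pos (-0.13:ℝ)]


/-- `|k₀(y⁻¹x)| ≲ 1/(r(x) sinh² r(x)) + a⁻¹/(r(x)² sinh r(x))`
for `x ∉ 2P₀`, `y ∈ P₀`. -/
theorem stmt6 :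
    ∃ C : ℝ, 0 < C ∧ ∀ x y : ℝ × ℝ × ℝ, 0 < x.2.2 → x ∉ twoP0 → y ∈ P0 →
      |k0 (ginvMul y x)| ≤
        C * (1 / (rD x * Real.sinh (rD x) ^ 2) +
          (x.2.2)⁻¹ / (rD x ^ 2 * Real.sinh (rD x))) := by
  refine ⟨10 ^ 9, by norm_num, ?_⟩
  rintro ⟨x1, x2, a⟩ ⟨y1, y2, b⟩ ha hx hy
  simp only [P0, mem_setOf_eq, mem_Icc] at hy
  obtain ⟨⟨hy1l, hy1u⟩, ⟨hy2l, hy2u⟩, hbl, hbu⟩ := hy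
  have ha : (0:ℝ) < a := ha
  rw [show ((x1, x2, a) : ℝ × ℝ × ℝ).2.2 = a from rfl]
  -- numeric facts about exp
  have hE1 : (2.7182818283:ℝ) < Real.exp 1 := Real.exp_one_gt_d9
  have hE2 : Real.exp 1 < 2.7182818286 := Real.exp_one_lt_d9
  have hb0 : 0 < b := lt_of_lt_of_le (Real.exp_pos _) hbl
  have hbU : b ≤ 2.72 := by linarith
  have hbL : (0.36:ℝ) ≤ b := by
    have h0 : (0:ℝ) < Real.exp 1 := Real.exp_pos 1
    have hm : Real.exp 1 * (Real.exp 1)⁻¹ = 1 := mul_inv_cancel₀ h0.ne'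
    have hip : (0:ℝ) < (Real.exp 1)⁻¹ := inv_pos.mpr h0
    have h36 : (0.36:ℝ) ≤ (Real.exp 1)⁻¹ := by nlinarith only [hm, hip, hE2]
    rw [Real.exp_neg] at hbl; linarith
  have hexp2 : Real.exp 2 = Real.exp 1 * Real.exp 1 := by
    rw [← Real.exp_add]; norm_num
  have hexp2lb : (7.38:ℝ) ≤ Real.exp 2 := by rw [hexp2]; nlinarith only [hE1]
  have hexpm2 : Real.exp (-2) ≤ 0.14 := by
    have h0 : (0:ℝ) < Real.exp 2 := Real.exp_pos 2
    have hm : Real.exp 2 * (Real.exp 2)⁻¹ = 1 := mul_inv_cancel₀ h0.ne'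
    have hip : (0:ℝ) < (Real.exp 2)⁻¹ := inv_pos.mpr h0
    have h14 : (Real.exp 2)⁻¹ ≤ 0.14 := by nlinarith only [hm, hip, hexp2lb]
    rw [show (-2:ℝ) = -(2:ℝ) by norm_num, Real.exp_neg]; linarith
  -- set up the main quantities
  set z : ℝ × ℝ × ℝ := ginvMul (y1, y2, b) (x1, x2, a) with hz
  set c : ℝ := chD z with hcdef
  set C : ℝ := chD (x1, x2, a) with hCdef
  set s : ℝ := Real.sqrt (c ^ 2 - 1) with hsdef
  set S : ℝ := Real.sqrt (C ^ 2 - 1) with hSdef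
  set r : ℝ := rD (x1, x2, a) with hrdef
  set rz : ℝ := rD z with hrzdef
  have hc_mul : c * (2 * a * b) = a ^ 2 + b ^ 2 + (x1 - y1) ^ 2 + (x2 - y2) ^ 2 := by
    rw [hcdef, hz]
    simp only [chD, ginvMul]
    field_simp
    ring
  have hCfrac : C = (a ^ 2 + 1 + x1 ^ 2 + x2 ^ 2) / (2 * a) := by
    rw [hCdef]; simp only [chD]; field_simp; ring
  -- c ≥ 1.01
  have hc101 : (1.01:ℝ) ≤ c := by
    by_contra hcon
    push_neg at hcon
    have hlt : a ^ 2 + b ^ 2 + (x1 - y1) ^ 2 + (x2 - y2) ^ 2 < 2.02 * (a * b) := by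
      nlinarith only [hcon, hc_mul, mul_pos ha hb0]
    obtain ⟨⟨hal, hau⟩, ⟨h1l, h1u⟩, ⟨h2l, h2u⟩⟩ :=
      L1aux6 ha hb0 hbU hbL hy1l hy1u hy2l hy2u hlt
    exact hx ⟨mem_Icc.mpr ⟨h1l, h1u⟩, mem_Icc.mpr ⟨h2l, h2u⟩,
      mem_Icc.mpr ⟨by linarith, by linarith⟩⟩
  have hcpos : (0:ℝ) < c := by linarith
  -- C > 1
  have hC1 : (1:ℝ) < C := by
    by_contra hcon
    push_neg at hcon
    rw [hCfrac, div_le_one (by linarith : (0:ℝ) < 2 * a)] at hcon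
    have ha1 : a = 1 := by nlinarith only [hcon, sq_nonneg (a - 1), sq_nonneg x1, sq_nonneg x2]
    have hx10 : x1 = 0 := by nlinarith only [hcon, sq_nonneg (a - 1), sq_nonneg x1, sq_nonneg x2]
    have hx20 : x2 = 0 := by nlinarith only [hcon, sq_nonneg (a - 1), sq_nonneg x1, sq_nonneg x2]
    exact hx ⟨mem_Icc.mpr ⟨by rw [hx10]; norm_num, by rw [hx10]; norm_num⟩,
      mem_Icc.mpr ⟨by rw [hx20]; norm_num, by rw [hx20]; norm_num⟩,
      mem_Icc.mpr ⟨by show Real.exp (-2) ≤ a; linarith,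
        by show a ≤ Real.exp 2; linarith⟩⟩
  -- C ≤ 28 c
  have hC28 : C ≤ 28 * c := by
    have hpoly := L2aux6 (a := a) (x1 := x1) (x2 := x2) hb0 hbU hbL hy1l hy1u hy2l hy2u
    rw [hCfrac, div_le_iff₀ (by linarith : (0:ℝ) < 2 * a)]
    have h1 : b * (a ^ 2 + 1 + x1 ^ 2 + x2 ^ 2) ≤ b * (28 * c * (2 * a)) := by
      have he : b * (28 * c * (2 * a)) = 28 * (c * (2 * a * b)) := by ring
      rw [he, hc_mul]; exact hpoly
    exact le_of_mul_le_mul_left h1 hb0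
  -- trigonometric identities
  have hc1 : (1:ℝ) ≤ c := by linarith
  have hC1' : (1:ℝ) ≤ C := hC1.le
  have hrz_eq : rz = Real.log (c + Real.sqrt (c ^ 2 - 1)) := by
    rw [hrzdef, hcdef]; rfl
  have hrx_eq : r = Real.log (C + Real.sqrt (C ^ 2 - 1)) := by
    rw [hrdef, hCdef]; rfl
  have hexpz : Real.exp rz = c + s := by
    rw [hrz_eq, hsdef]; exact (trig_facts6 hc1).1
  have hcoshz : Real.cosh rz = c := by
    rw [hrz_eq]; exact (trig_facts6 hc1).2.1
  have hsinhz : Real.sinh rz = s := by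
    rw [hrz_eq, hsdef]; exact (trig_facts6 hc1).2.2
  have hexpx : Real.exp r = C + S := by
    rw [hrx_eq, hSdef]; exact (trig_facts6 hC1').1
  have hsinhx : Real.sinh r = S := by
    rw [hrx_eq, hSdef]; exact (trig_facts6 hC1').2.2
  -- basic bounds on s, S, rz, r
  have hs0 : 0 ≤ s := Real.sqrt_nonneg _
  have hS0 : 0 ≤ S := Real.sqrt_nonneg _
  have hs2 : s ^ 2 = c ^ 2 - 1 := Real.sq_sqrt (by nlinarith only [hc1])
  have hS2 : S ^ 2 = C ^ 2 - 1 := Real.sq_sqrt (by nlinarith only [hC1'])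
  have hs14 : (0.14:ℝ) ≤ s := by nlinarith only [hs2, hs0, hc101]
  have hspos : (0:ℝ) < s := by linarith
  have hcs : c ≤ 8 * s := by nlinarith only [hs2, hs0, hc101, hcpos]
  have hSC : S ≤ C := by nlinarith only [hS2, hS0, hC1]
  have hSpos : (0:ℝ) < S := by
    rw [hSdef]; exact Real.sqrt_pos.mpr (by nlinarith only [hC1])
  have hS_s : S ≤ 224 * s := by linarith
  have hrz13 : (0.13:ℝ) ≤ rz := by
    have h115 : Real.exp (0.13:ℝ) ≤ Real.exp rz := by
      rw [hexpz]; linarith [exp013aux6]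
    exact Real.exp_le_exp.mp h115
  have hrzpos : (0:ℝ) < rz := by linarith
  have hrz_s : rz ≤ s := by
    have h := Real.self_le_sinh_iff.mpr hrzpos.le
    rw [hsinhz] at h; exact h
  have hr0 : (0:ℝ) < r := by
    have h : Real.exp 0 < Real.exp r := by
      rw [Real.exp_zero, hexpx]; linarith
    exact Real.exp_lt_exp.mp h
  have hr_le : r ≤ rz + 4.1 := by
    have h : Real.exp r ≤ Real.exp (rz + 4.1) := by
      rw [Real.exp_add, hexpx, hexpz]
      have h1 : C + S ≤ 56 * (c + s) := by linarith
      have h2 : 56 * (c + s) ≤ (c + s) * Real.exp 4.1 := by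
        nlinarith only [exp41aux6, hs0, hcpos]
      linarith
    exact Real.exp_le_exp.mp h
  have hr_rz : r ≤ 33 * rz := by linarith
  -- the kernel value
  have hz22 : z.2.2 = a / b := rfl
  have hDpos : (0:ℝ) < rz ^ 2 * s ^ 3 := mul_pos (pow_pos hrzpos 2) (pow_pos hspos 3)
  have hpipos : (0:ℝ) < (2 * Real.pi ^ 2)⁻¹ := by positivity
  have hpi : (2 * Real.pi ^ 2)⁻¹ ≤ 1 := by
    apply inv_le_one_of_one_le₀
    nlinarith only [Real.pi_gt_three]
  have hk : k0 z = (2 * Real.pi ^ 2)⁻¹ *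
      (-(s + rz * c) + b / a * (c * s + rz)) / (rz ^ 2 * s ^ 3) := by
    rw [show k0 z = (2 * Real.pi ^ 2)⁻¹ *
        (-(Real.sinh (rD z) + rD z * Real.cosh (rD z)) +
          (z.2.2)⁻¹ * (Real.cosh (rD z) * Real.sinh (rD z) + rD z)) /
        (rD z ^ 2 * Real.sinh (rD z) ^ 3) from rfl]
    rw [← hrzdef, hsinhz, hcoshz, hz22, inv_div]
  have hT1 : (0:ℝ) ≤ s + rz * c := add_nonneg hs0 (mul_nonneg hrzpos.le hcpos.le)
  have hT2 : (0:ℝ) ≤ b / a * (c * s + rz) :=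
    mul_nonneg (div_nonneg hb0.le ha.le)
      (add_nonneg (mul_nonneg hcpos.le hs0) hrzpos.le)
  have habs : |k0 z| ≤ ((s + rz * c) + b / a * (c * s + rz)) / (rz ^ 2 * s ^ 3) := by
    rw [hk, abs_div, abs_of_pos hDpos, abs_mul, abs_of_pos hpipos]
    have hNabs : |(-(s + rz * c) + b / a * (c * s + rz))| ≤
        (s + rz * c) + b / a * (c * s + rz) := by
      rw [abs_le]; constructor
      · linarith only [hT1, hT2]
      · linarith only [hT1, hT2]
    have hmono : (2 * Real.pi ^ 2)⁻¹ * |(-(s + rz * c) + b / a * (c * s + rz))| ≤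
        (s + rz * c) + b / a * (c * s + rz) := by
      have h1 := mul_le_mul_of_nonneg_right hpi
        (abs_nonneg (-(s + rz * c) + b / a * (c * s + rz)))
      linarith only [h1, hNabs]
    exact div_le_div_of_nonneg_right hmono hDpos.le
  -- the two comparison estimates
  have hprod1 : r * S ^ 2 ≤ 1655808 * (rz * s ^ 2) := by
    have h1 : S ^ 2 ≤ 50176 * s ^ 2 := by nlinarith only [hS_s, hS0, hs0]
    calc r * S ^ 2 ≤ (33 * rz) * (50176 * s ^ 2) :=
          mul_le_mul hr_rz h1 (sq_nonneg S) (by linarith)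
      _ = 1655808 * (rz * s ^ 2) := by ring
  have hprod2 : r ^ 2 * S ≤ 243936 * (rz ^ 2 * s) := by
    have h1 : r ^ 2 ≤ 1089 * rz ^ 2 := by nlinarith only [hr_rz, hr0.le, hrzpos.le]
    calc r ^ 2 * S ≤ (1089 * rz ^ 2) * (224 * s) :=
          mul_le_mul h1 hS_s hS0 (by nlinarith only [sq_nonneg rz])
      _ = 243936 * (rz ^ 2 * s) := by ring
  have key1 : (s + rz * c) / (rz ^ 2 * s ^ 3) ≤ 5 * 10 ^ 8 * (1 / (r * S ^ 2)) := by
    rw [mul_one_div, div_le_div_iff₀ hDpos (mul_pos hr0 (pow_pos hSpos 2))]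
    have hA : s + rz * c ≤ 16 * (rz * s) := by
      have h1 : 0.13 * s ≤ rz * s := mul_le_mul_of_nonneg_right hrz13 hs0
      have h2 : rz * c ≤ rz * (8 * s) := mul_le_mul_of_nonneg_left hcs hrzpos.le
      linarith only [h1, h2, mul_nonneg hrzpos.le hs0]
    have h3 := mul_le_mul hA hprod1 (mul_nonneg hr0.le (sq_nonneg S))
      (mul_nonneg (by norm_num) (mul_nonneg hrzpos.le hs0))
    nlinarith only [h3, mul_nonneg (pow_nonneg hrzpos.le 2) (pow_nonneg hs0 3)]
  have key2 : b / a * (c * s + rz) / (rz ^ 2 * s ^ 3) ≤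
      5 * 10 ^ 8 * (a⁻¹ / (r ^ 2 * S)) := by
    rw [← mul_div_assoc, div_le_div_iff₀ hDpos (mul_pos (pow_pos hr0 2) hSpos)]
    have hba : b / a ≤ 2.72 * a⁻¹ := by
      rw [div_eq_mul_inv]
      exact mul_le_mul_of_nonneg_right hbU (inv_nonneg.mpr ha.le)
    have hB : c * s + rz ≤ 16 * s ^ 2 := by
      have h1 : c * s ≤ 8 * s * s := mul_le_mul_of_nonneg_right hcs hs0
      have h2 : 0.14 * s ≤ s * s := mul_le_mul_of_nonneg_right hs14 hs0
      nlinarith only [h1, h2, hrz_s]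
    have h1 : b / a * (c * s + rz) ≤ 2.72 * a⁻¹ * (16 * s ^ 2) :=
      mul_le_mul hba hB (add_nonneg (mul_nonneg hcpos.le hs0) hrzpos.le)
        (mul_nonneg (by norm_num) (inv_nonneg.mpr ha.le))
    have h2 := mul_le_mul h1 hprod2 (mul_nonneg (sq_nonneg r) hS0)
      (mul_nonneg (mul_nonneg (by norm_num) (inv_nonneg.mpr ha.le))
        (mul_nonneg (by norm_num) (sq_nonneg s)))
    nlinarith only [h2, mul_nonneg (mul_nonneg (inv_nonneg.mpr ha.le) (sq_nonneg rz))
      (pow_nonneg hs0 3)]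
  -- assemble
  rw [hsinhx]
  have hfin1 : (0:ℝ) < 1 / (r * S ^ 2) :=
    div_pos one_pos (mul_pos hr0 (pow_pos hSpos 2))
  have hfin2 : (0:ℝ) < a⁻¹ / (r ^ 2 * S) :=
    div_pos (inv_pos.mpr ha) (mul_pos (pow_pos hr0 2) hSpos)
  calc |k0 z| ≤ ((s + rz * c) + b / a * (c * s + rz)) / (rz ^ 2 * s ^ 3) := habs
    _ = (s + rz * c) / (rz ^ 2 * s ^ 3) + b / a * (c * s + rz) / (rz ^ 2 * s ^ 3) := by
        ring
    _ ≤ 5 * 10 ^ 8 * (1 / (r * S ^ 2)) + 5 * 10 ^ 8 * (a⁻¹ / (r ^ 2 * S)) :=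
        add_le_add key1 key2
    _ ≤ 10 ^ 9 * (1 / (r * S ^ 2) + a⁻¹ / (r ^ 2 * S)) := by
        linarith only [hfin1.le, hfin2.le]
end
end

section
/- There exists a constant C > 0 such that for every R ≥ 2 one has ∫_{B(e,R) ∖ 2P₀} a⁻¹ /(r(x)² sinh r(x)) dρ(x) ≤ C log R, where B(e,R) = {x ∈ G : r(x) < R}. -/
open Real MeasureTheory Set

noncomputable section

-- auxiliary constants
def myc0 : ℝ := Real.log (1 + 2 * Real.exp (-2))
def mykk : ℝ := (1 - Real.exp (-(2 * myc0))) / 2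
def myKK : ℝ := 8 * Real.exp 2 * (1 + 2 / myc0) / mykk
def myCC : ℝ := 2 * myKK / myc0 / Real.log 2 + 2 * myKK + 1

lemma myc0_pos : 0 < myc0 := Real.log_pos (by nlinarith [Real.exp_pos (-2 : ℝ)])

lemma exp_two_ge : (5 : ℝ) ≤ Real.exp 2 := by
  have h := Real.exp_one_gt_d9
  have : Real.exp 2 = Real.exp 1 * Real.exp 1 := by rw [← Real.exp_add]; norm_num
  nlinarith

lemma myc0_le_one : myc0 ≤ 1 := by
  have h1 : myc0 ≤ 2 * Real.exp (-2) := by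
    have := Real.log_le_sub_one_of_pos (x := 1 + 2 * Real.exp (-2))
      (by nlinarith [Real.exp_pos (-2 : ℝ)])
    unfold myc0; linarith
  have h2 : Real.exp (-2) ≤ 1 / 2 := by
    have hm : Real.exp (-2) * Real.exp 2 = 1 := by
      rw [← Real.exp_add]; norm_num
    nlinarith [exp_two_ge, Real.exp_pos (-2 : ℝ)]
  linarith

lemma mykk_pos : 0 < mykk := by
  have : Real.exp (-(2 * myc0)) < 1 := Real.exp_lt_one_iff.2 (by nlinarith [myc0_pos])
  unfold mykk; linarith

lemma myKK_pos : 0 < myKK := by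
  apply div_pos _ mykk_pos
  have := myc0_pos
  have : (0:ℝ) < 1 + 2 / myc0 := by positivity
  nlinarith [Real.exp_pos (2:ℝ)]

lemma myCC_pos : 0 < myCC := by
  have h1 := myKK_pos
  have h2 := myc0_pos
  have h3 : (0:ℝ) < Real.log 2 := Real.log_pos one_lt_two
  have : 0 < 2 * myKK / myc0 / Real.log 2 := by positivity
  unfold myCC; nlinarith

section part2
variable {p : ℝ × ℝ × ℝ}

lemma measurable_chD : Measurable chD := by unfold chD; fun_prop

lemma measurable_rD : Measurable rD := by
  unfold rD
  exact Real.measurable_log.comp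
    (measurable_chD.add (((measurable_chD.pow_const 2).sub measurable_const).sqrt))

lemma chD_ge_one (ha : 0 < p.2.2) : 1 ≤ chD p := by
  have h1 : 0 < (p.2.2)⁻¹ := inv_pos.2 ha
  have h2 : p.2.2 * (p.2.2)⁻¹ = 1 := mul_inv_cancel₀ ha.ne'
  have h3 : 0 ≤ p.1 ^ 2 + p.2.1 ^ 2 := by positivity
  unfold chD
  nlinarith [sq_nonneg (p.2.2 - 1), mul_nonneg h1.le h3]

lemma rD_nonneg (ha : 0 < p.2.2) : 0 ≤ rD p := by
  have h := chD_ge_one ha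
  apply Real.log_nonneg
  nlinarith [Real.sqrt_nonneg (chD p ^ 2 - 1)]

lemma cosh_rD (ha : 0 < p.2.2) : Real.cosh (rD p) = chD p := by
  have hc := chD_ge_one ha
  set c := chD p with hcdef
  have h1 : 0 ≤ c ^ 2 - 1 := by nlinarith
  have hs : Real.sqrt (c ^ 2 - 1) * Real.sqrt (c ^ 2 - 1) = c ^ 2 - 1 :=
    Real.mul_self_sqrt h1
  have hy : 0 < c + Real.sqrt (c ^ 2 - 1) := by
    nlinarith [Real.sqrt_nonneg (c ^ 2 - 1)]
  rw [rD, Real.cosh_eq, Real.exp_log hy, Real.exp_neg, Real.exp_log hy]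
  rw [div_eq_iff (two_ne_zero)]
  field_simp
  nlinarith [hs]

lemma rD_ge_myc0 (ha : 0 < p.2.2) (hp : p ∉ twoP0) : myc0 ≤ rD p := by
  have key : 1 + 2 * Real.exp (-2) ≤ chD p := by
    set a := p.2.2 with hadef
    have hinv : 0 < a⁻¹ := inv_pos.2 ha
    have hmul : a * a⁻¹ = 1 := mul_inv_cancel₀ ha.ne'
    have he2 : (5:ℝ) ≤ Real.exp 2 := exp_two_ge
    have hm : Real.exp (-2) * Real.exp 2 = 1 := by rw [← Real.exp_add]; norm_num
    have hepos : (0:ℝ) < Real.exp (-2) := Real.exp_pos _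
    by_cases hC : p.2.2 ∈ Icc (Real.exp (-2)) (Real.exp 2)
    · -- a in range; some x-coordinate is large
      have hx : 4 ≤ p.1 ^ 2 + p.2.1 ^ 2 := by
        have : ¬(p.1 ∈ Icc (-2:ℝ) 2) ∨ ¬(p.2.1 ∈ Icc (-2:ℝ) 2) := by
          by_contra hcon
          push_neg at hcon
          exact hp ⟨hcon.1, hcon.2, hC⟩
        rcases this with h | h <;>
        · rw [mem_Icc, not_and_or, not_le, not_le] at h
          rcases h with h | h <;> nlinarith [sq_nonneg p.1, sq_nonneg p.2.1]
      have haub : a ≤ Real.exp 2 := hC.2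
      have hainv : Real.exp (-2) ≤ a⁻¹ := by
        rw [Real.exp_neg]
        exact inv_anti₀ ha haub
      have h2 : 2 ≤ a + a⁻¹ := by nlinarith [sq_nonneg (a - 1)]
      have h3 : Real.exp (-2) * 4 ≤ a⁻¹ * (p.1 ^ 2 + p.2.1 ^ 2) := by
        apply mul_le_mul hainv hx (by norm_num) hinv.le
      unfold chD
      rw [← hadef]
      linarith
    · -- a out of range
      have h4 : Real.exp 2 ≤ a + a⁻¹ := by
        rw [mem_Icc, not_and_or, not_le, not_le] at hC
        rcases hC with h | h
        · -- a < exp (-2), so a⁻¹ > exp 2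
          have : Real.exp 2 ≤ a⁻¹ := by
            have h2 := inv_anti₀ ha h.le
            rwa [Real.exp_neg, inv_inv] at h2
          linarith
        · linarith [hinv.le]
      have h5 : 0 ≤ a⁻¹ * (p.1 ^ 2 + p.2.1 ^ 2) := by positivity
      have h6 : 2 + 4 * Real.exp (-2) ≤ Real.exp 2 := by nlinarith
      unfold chD
      rw [← hadef]
      linarith
  calc myc0 = Real.log (1 + 2 * Real.exp (-2)) := rfl
    _ ≤ Real.log (chD p) := by
        apply Real.log_le_log (by nlinarith [Real.exp_pos (-2:ℝ)]) key
    _ ≤ rD p := by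
        apply Real.log_le_log (by nlinarith [Real.exp_pos (-2:ℝ)])
        nlinarith [Real.sqrt_nonneg (chD p ^ 2 - 1)]

lemma chD_le_of_rD_lt (ha : 0 < p.2.2) {s : ℝ} (h : rD p < s) :
    chD p ≤ Real.exp s := by
  have h0 := rD_nonneg ha
  have hs0 : 0 ≤ s := le_of_lt (lt_of_le_of_lt h0 h)
  have h1 : Real.cosh (rD p) ≤ Real.cosh s := by
    rw [Real.cosh_le_cosh, abs_of_nonneg h0, abs_of_nonneg hs0]
    exact h.le
  have h2 : Real.cosh s ≤ Real.exp s := by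
    rw [Real.cosh_eq]
    have : Real.exp (-s) ≤ Real.exp s := Real.exp_le_exp.2 (by linarith)
    linarith
  rw [cosh_rD ha] at h1
  linarith

end part2
section part3

open scoped ENNReal

lemma measure_sq_le {c : ℝ} : volume {x : ℝ | x ^ 2 ≤ c} ≤ ENNReal.ofReal (2 * Real.sqrt c) := by
  have hsub : {x : ℝ | x ^ 2 ≤ c} ⊆ Icc (-(Real.sqrt c)) (Real.sqrt c) := by
    intro x hx
    simp only [mem_setOf_eq] at hx
    have habs : |x| ≤ Real.sqrt c := by
      rw [← Real.sqrt_sq_eq_abs]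
      exact Real.sqrt_le_sqrt hx
    exact abs_le.1 habs
  calc volume {x : ℝ | x ^ 2 ≤ c} ≤ volume (Icc (-(Real.sqrt c)) (Real.sqrt c)) :=
        measure_mono hsub
    _ = ENNReal.ofReal (Real.sqrt c - -(Real.sqrt c)) := Real.volume_Icc
    _ = ENNReal.ofReal (2 * Real.sqrt c) := by ring_nf

lemma lint_Icc_inv {E : ℝ} (hE : 1 ≤ E) :
    ∫⁻ a : ℝ in Icc E⁻¹ E, ENNReal.ofReal (4 * E * a⁻¹) ≤
      ENNReal.ofReal (8 * E * Real.log E) := by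
  have hEpos : 0 < E := lt_of_lt_of_le one_pos hE
  have hle : E⁻¹ ≤ E := le_trans (inv_le_one_of_one_le₀ hE) hE
  have hInt : IntegrableOn (fun a : ℝ => 4 * E * a⁻¹) (Icc E⁻¹ E) volume := by
    apply ContinuousOn.integrableOn_Icc
    apply ContinuousOn.mul continuousOn_const
    apply ContinuousOn.inv₀ continuousOn_id
    intro x hx
    exact ne_of_gt (lt_of_lt_of_le (inv_pos.2 hEpos) hx.1)
  have hnn : 0 ≤ᵐ[volume.restrict (Icc E⁻¹ E)] fun a : ℝ => 4 * E * a⁻¹ := by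
    filter_upwards [ae_restrict_mem measurableSet_Icc] with a ha
    have : 0 < a := lt_of_lt_of_le (inv_pos.2 hEpos) ha.1
    positivity
  rw [← ofReal_integral_eq_lintegral_ofReal hInt hnn]
  apply ENNReal.ofReal_le_ofReal
  have hval : ∫ a in Icc E⁻¹ E, 4 * E * a⁻¹ = 4 * E * Real.log (E / E⁻¹) := by
    rw [integral_Icc_eq_integral_Ioc, ← intervalIntegral.integral_of_le hle]
    rw [intervalIntegral.integral_const_mul]
    rw [integral_inv]
    rw [Set.uIcc_of_le hle]
    intro h
    exact absurd h.1 (not_le.2 (inv_pos.2 hEpos))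
  rw [hval]
  have : E / E⁻¹ = E * E := by field_simp
  rw [this, Real.log_mul hEpos.ne' hEpos.ne']
  nlinarith [Real.log_nonneg hE, hEpos]

lemma box_bound {E : ℝ} (hE : 1 ≤ E) :
    ∫⁻ p in {p : ℝ × ℝ × ℝ | p.1 ^ 2 ≤ E * p.2.2 ∧ p.2.1 ^ 2 ≤ E * p.2.2 ∧
        p.2.2 ∈ Icc E⁻¹ E},
      ENNReal.ofReal ((p.2.2)⁻¹ * (p.2.2)⁻¹) ∂volume ≤ ENNReal.ofReal (8 * E * Real.log E) := by
  classical
  set W : ℝ → ℝ → ℝ≥0∞ := fun a x => if x ^ 2 ≤ E * a then (1 : ℝ≥0∞) else 0 with hW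
  set J : ℝ → ℝ≥0∞ := fun a => if a ∈ Icc E⁻¹ E then ENNReal.ofReal (a⁻¹ * a⁻¹) else 0 with hJ
  have hJtop : ∀ a, J a ≠ ⊤ := by
    intro a; rw [hJ]; dsimp only; split_ifs
    · exact ENNReal.ofReal_ne_top
    · exact ENNReal.zero_ne_top
  have hWtop : ∀ a x, W a x ≠ ⊤ := by
    intro a x; rw [hW]; dsimp only; split_ifs
    · exact ENNReal.one_ne_top
    · exact ENNReal.zero_ne_top
  have hs1 : MeasurableSet {p : ℝ × ℝ × ℝ | p.1 ^ 2 ≤ E * p.2.2} :=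
    measurableSet_le (measurable_fst.pow_const 2)
      (measurable_const.mul (measurable_snd.snd))
  have hs2 : MeasurableSet {p : ℝ × ℝ × ℝ | p.2.1 ^ 2 ≤ E * p.2.2} :=
    measurableSet_le ((measurable_snd.fst).pow_const 2)
      (measurable_const.mul (measurable_snd.snd))
  have hs3 : MeasurableSet {p : ℝ × ℝ × ℝ | p.2.2 ∈ Icc E⁻¹ E} :=
    (measurable_snd.snd) measurableSet_Icc
  have hBox : MeasurableSet {p : ℝ × ℝ × ℝ | p.1 ^ 2 ≤ E * p.2.2 ∧ p.2.1 ^ 2 ≤ E * p.2.2 ∧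
      p.2.2 ∈ Icc E⁻¹ E} := hs1.inter (hs2.inter hs3)
  have hJmeas : Measurable J := by
    rw [hJ]
    exact Measurable.ite measurableSet_Icc
      ((measurable_inv.mul measurable_inv).ennreal_ofReal) measurable_const
  have hsa : ∀ a : ℝ, MeasurableSet {x : ℝ | x ^ 2 ≤ E * a} := fun a =>
    measurableSet_le (measurable_id.pow_const 2) measurable_const
  have hWint : ∀ a : ℝ, ∫⁻ x : ℝ, W a x = volume {x : ℝ | x ^ 2 ≤ E * a} := by
    intro a
    have : W a = {x : ℝ | x ^ 2 ≤ E * a}.indicator (fun _ => 1) := by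
      funext x; rw [hW, Set.indicator_apply]; rfl
    rw [this]
    exact lintegral_indicator_one (hsa a)
  -- measurability of the two product functions
  have hF1 : Measurable (fun z : ℝ × ℝ × ℝ => W z.2.2 z.1 * (W z.2.2 z.2.1 * J z.2.2)) := by
    apply Measurable.mul
    · exact Measurable.ite hs1 measurable_const measurable_const
    apply Measurable.mul
    · exact Measurable.ite hs2 measurable_const measurable_const
    · exact hJmeas.comp (measurable_snd.snd)
  have hF2 : Measurable (fun q : ℝ × ℝ =>
      W q.2 q.1 * (J q.2 * ENNReal.ofReal (2 * Real.sqrt (E * q.2)))) := by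
    apply Measurable.mul
    · exact Measurable.ite
        (measurableSet_le (measurable_fst.pow_const 2) (measurable_const.mul measurable_snd))
        measurable_const measurable_const
    apply Measurable.mul
    · exact hJmeas.comp measurable_snd
    · apply Measurable.ennreal_ofReal
      apply Measurable.const_mul
      exact (measurable_const.mul measurable_snd).sqrt
  have hind : ∀ p : ℝ × ℝ × ℝ,
      ({p : ℝ × ℝ × ℝ | p.1 ^ 2 ≤ E * p.2.2 ∧ p.2.1 ^ 2 ≤ E * p.2.2 ∧
        p.2.2 ∈ Icc E⁻¹ E}.indicator
        (fun p => ENNReal.ofReal ((p.2.2)⁻¹ * (p.2.2)⁻¹))) p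
      = W p.2.2 p.1 * (W p.2.2 p.2.1 * J p.2.2) := by
    intro p
    rw [Set.indicator_apply, hW, hJ]
    dsimp only
    by_cases h1 : p.1 ^ 2 ≤ E * p.2.2
    · by_cases h2 : p.2.1 ^ 2 ≤ E * p.2.2
      · by_cases h3 : p.2.2 ∈ Icc E⁻¹ E
        · have hm : p ∈ {p : ℝ × ℝ × ℝ | p.1 ^ 2 ≤ E * p.2.2 ∧ p.2.1 ^ 2 ≤ E * p.2.2 ∧
              p.2.2 ∈ Icc E⁻¹ E} := ⟨h1, h2, h3⟩
          rw [if_pos hm, if_pos h1, if_pos h2, if_pos h3, one_mul, one_mul]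
        · rw [if_neg (fun hm => h3 hm.2.2), if_neg h3, mul_zero, mul_zero]
      · rw [if_neg (fun hm => h2 hm.2.1), if_neg h2, zero_mul, mul_zero]
    · rw [if_neg (fun hm => h1 hm.1), if_neg h1, zero_mul]
  rw [← lintegral_indicator hBox]
  calc ∫⁻ p : ℝ × ℝ × ℝ,
      ({p : ℝ × ℝ × ℝ | p.1 ^ 2 ≤ E * p.2.2 ∧ p.2.1 ^ 2 ≤ E * p.2.2 ∧
        p.2.2 ∈ Icc E⁻¹ E}.indicator (fun p => ENNReal.ofReal ((p.2.2)⁻¹ * (p.2.2)⁻¹))) p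
      = ∫⁻ p : ℝ × ℝ × ℝ, W p.2.2 p.1 * (W p.2.2 p.2.1 * J p.2.2) :=
        lintegral_congr hind
    _ = ∫⁻ q : ℝ × ℝ, ∫⁻ x : ℝ, W q.2 x * (W q.2 q.1 * J q.2) := by
        rw [Measure.volume_eq_prod]
        exact lintegral_prod_symm' _ hF1
    _ ≤ ∫⁻ q : ℝ × ℝ, (W q.2 q.1 * (J q.2 * ENNReal.ofReal (2 * Real.sqrt (E * q.2)))) := by
        apply lintegral_mono
        intro q
        dsimp only
        rw [lintegral_mul_const' _ _ (ENNReal.mul_ne_top (hWtop _ _) (hJtop _))]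
        rw [hWint q.2]
        calc volume {x : ℝ | x ^ 2 ≤ E * q.2} * (W q.2 q.1 * J q.2)
            ≤ ENNReal.ofReal (2 * Real.sqrt (E * q.2)) * (W q.2 q.1 * J q.2) :=
              mul_le_mul_left measure_sq_le _
          _ = W q.2 q.1 * (J q.2 * ENNReal.ofReal (2 * Real.sqrt (E * q.2))) := by ring
    _ = ∫⁻ a : ℝ, ∫⁻ x : ℝ, W a x * (J a * ENNReal.ofReal (2 * Real.sqrt (E * a))) := by
        rw [Measure.volume_eq_prod]
        exact lintegral_prod_symm' _ hF2
    _ ≤ ∫⁻ a : ℝ, (Icc E⁻¹ E).indicator (fun a => ENNReal.ofReal (4 * E * a⁻¹)) a := by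
        apply lintegral_mono
        intro a
        dsimp only
        rw [lintegral_mul_const' _ _
          (ENNReal.mul_ne_top (hJtop _) ENNReal.ofReal_ne_top)]
        rw [hWint a]
        rw [Set.indicator_apply]
        by_cases ha : a ∈ Icc E⁻¹ E
        · rw [if_pos ha]
          have hEpos : 0 < E := lt_of_lt_of_le one_pos hE
          have hapos : 0 < a := lt_of_lt_of_le (inv_pos.2 hEpos) ha.1
          have hEa : 0 ≤ E * a := by positivity
          calc volume {x : ℝ | x ^ 2 ≤ E * a} * (J a * ENNReal.ofReal (2 * Real.sqrt (E * a)))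
              ≤ ENNReal.ofReal (2 * Real.sqrt (E * a)) *
                (J a * ENNReal.ofReal (2 * Real.sqrt (E * a))) :=
                mul_le_mul_left measure_sq_le _
            _ = ENNReal.ofReal (4 * E * a⁻¹) := by
                rw [hJ]; dsimp only; rw [if_pos ha]
                rw [← ENNReal.ofReal_mul (by positivity), ← ENNReal.ofReal_mul (by positivity)]
                congr 1
                have hss2 : Real.sqrt E * Real.sqrt a * (Real.sqrt E * Real.sqrt a) = E * a := by
                  rw [← Real.sqrt_mul hEpos.le]
                  exact Real.mul_self_sqrt hEa
                field_simp
                linear_combination 4 * Real.sq_sqrt hEa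
        · rw [if_neg ha, hJ]; dsimp only; rw [if_neg ha]
          simp
    _ = ∫⁻ a : ℝ in Icc E⁻¹ E, ENNReal.ofReal (4 * E * a⁻¹) :=
        lintegral_indicator measurableSet_Icc _
    _ ≤ ENNReal.ofReal (8 * E * Real.log E) := lint_Icc_inv hE

end part3
section part4

open scoped ENNReal

lemma measurable_fI : Measurable (fun p : ℝ × ℝ × ℝ =>
    ENNReal.ofReal ((p.2.2)⁻¹ / (rD p ^ 2 * Real.sinh (rD p)))) := by
  apply Measurable.ennreal_ofReal
  exact ((measurable_snd.snd).inv).div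
    ((measurable_rD.pow_const 2).mul (Real.continuous_sinh.measurable.comp measurable_rD))

lemma two_le_exp_one : (2:ℝ) ≤ Real.exp 1 := by nlinarith [Real.add_one_le_exp (1:ℝ)]

lemma shell_bound {s : ℝ} (hs : myc0 ≤ s) :
    ∫⁻ p in {p : ℝ × ℝ × ℝ | 0 < p.2.2 ∧ s ≤ rD p ∧ rD p < s + 1},
      ENNReal.ofReal ((p.2.2)⁻¹ / (rD p ^ 2 * Real.sinh (rD p))) ∂ρG
    ≤ ENNReal.ofReal (myKK / s) := by
  have hs0 : 0 < s := lt_of_lt_of_le myc0_pos hs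
  set E : ℝ := Real.exp (s + 2) with hEdef
  have hE1 : 1 ≤ E := by
    rw [hEdef, ← Real.exp_zero]
    exact Real.exp_le_exp.2 (by linarith)
  set T : Set (ℝ × ℝ × ℝ) := {p | 0 < p.2.2 ∧ s ≤ rD p ∧ rD p < s + 1} with hTdef
  have hT : MeasurableSet T := by
    apply MeasurableSet.inter
    · exact measurableSet_lt measurable_const (measurable_snd.snd)
    apply MeasurableSet.inter
    · exact measurableSet_le measurable_const measurable_rD
    · exact measurableSet_lt measurable_rD measurable_const
  have hTU : T ⊆ {p : ℝ × ℝ × ℝ | 0 < p.2.2} := fun p hp => hp.1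
  -- pass from ρG to volume
  have step1 : ∫⁻ p in T,
      ENNReal.ofReal ((p.2.2)⁻¹ / (rD p ^ 2 * Real.sinh (rD p))) ∂ρG
      = ∫⁻ p in T, ENNReal.ofReal ((p.2.2)⁻¹) *
          ENNReal.ofReal ((p.2.2)⁻¹ / (rD p ^ 2 * Real.sinh (rD p))) ∂volume := by
    rw [ρG]
    rw [setLIntegral_withDensity_eq_setLIntegral_mul _
      (by exact ((measurable_snd.snd).inv).ennreal_ofReal) measurable_fI hT]
    rw [Measure.restrict_restrict hT, inter_eq_self_of_subset_left hTU]
    rfl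
  -- pointwise bound on T
  have hptwise : ∀ p ∈ T, ENNReal.ofReal ((p.2.2)⁻¹) *
      ENNReal.ofReal ((p.2.2)⁻¹ / (rD p ^ 2 * Real.sinh (rD p)))
      ≤ ENNReal.ofReal (Real.exp (-s) / (mykk * s ^ 2)) *
        ENNReal.ofReal ((p.2.2)⁻¹ * (p.2.2)⁻¹) := by
    intro p hp
    obtain ⟨ha, hr1, hr2⟩ := hp
    set a := p.2.2
    set r := rD p
    have hr0 : 0 < r := lt_of_lt_of_le hs0 hr1
    have hsh_pos : 0 < Real.sinh r := Real.sinh_pos_iff.2 hr0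
    have hsinh : mykk * Real.exp s ≤ Real.sinh r := by
      have h1 : Real.sinh s ≤ Real.sinh r := Real.sinh_le_sinh.2 hr1
      have h2 : Real.exp (-s) ≤ Real.exp (-(2 * myc0)) * Real.exp s := by
        rw [← Real.exp_add]
        exact Real.exp_le_exp.2 (by linarith)
      have h3 : Real.sinh s = (Real.exp s - Real.exp (-s)) / 2 := Real.sinh_eq s
      rw [mykk]
      nlinarith [Real.exp_pos s]
    have hmain : mykk * s ^ 2 * Real.exp s ≤ r ^ 2 * Real.sinh r := by
      have hss : s ^ 2 ≤ r ^ 2 := by nlinarith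
      calc mykk * s ^ 2 * Real.exp s = s ^ 2 * (mykk * Real.exp s) := by ring
        _ ≤ s ^ 2 * Real.sinh r := by nlinarith [sq_nonneg s]
        _ ≤ r ^ 2 * Real.sinh r := by nlinarith
    have hpos1 : 0 < mykk * s ^ 2 * Real.exp s :=
      mul_pos (mul_pos mykk_pos (pow_pos hs0 2)) (Real.exp_pos s)
    have hinv2 : (r ^ 2 * Real.sinh r)⁻¹ ≤ (mykk * s ^ 2 * Real.exp s)⁻¹ :=
      inv_anti₀ hpos1 hmain
    have hrw : Real.exp (-s) / (mykk * s ^ 2) = (mykk * s ^ 2 * Real.exp s)⁻¹ := by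
      rw [Real.exp_neg]
      rw [mul_inv, mul_inv]
      rw [div_eq_mul_inv, mul_inv]
      ring
    have hreal : a⁻¹ * (a⁻¹ / (r ^ 2 * Real.sinh r))
        ≤ Real.exp (-s) / (mykk * s ^ 2) * (a⁻¹ * a⁻¹) := by
      rw [div_eq_mul_inv (a⁻¹), hrw]
      have h0 : (0:ℝ) ≤ a⁻¹ * a⁻¹ := by positivity
      have hmm := mul_le_mul_of_nonneg_left hinv2 h0
      calc a⁻¹ * (a⁻¹ * (r ^ 2 * Real.sinh r)⁻¹)
          = a⁻¹ * a⁻¹ * (r ^ 2 * Real.sinh r)⁻¹ := by ring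
        _ ≤ a⁻¹ * a⁻¹ * (mykk * s ^ 2 * Real.exp s)⁻¹ := hmm
        _ = (mykk * s ^ 2 * Real.exp s)⁻¹ * (a⁻¹ * a⁻¹) := by ring
    calc ENNReal.ofReal (a⁻¹) * ENNReal.ofReal (a⁻¹ / (r ^ 2 * Real.sinh r))
        = ENNReal.ofReal (a⁻¹ * (a⁻¹ / (r ^ 2 * Real.sinh r))) := by
          rw [← ENNReal.ofReal_mul (by positivity)]
      _ ≤ ENNReal.ofReal (Real.exp (-s) / (mykk * s ^ 2) * (a⁻¹ * a⁻¹)) :=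
          ENNReal.ofReal_le_ofReal hreal
      _ = ENNReal.ofReal (Real.exp (-s) / (mykk * s ^ 2)) *
          ENNReal.ofReal (a⁻¹ * a⁻¹) := by
          rw [← ENNReal.ofReal_mul]
          have := mykk_pos
          positivity
  -- T is contained in the box
  have hTBox : T ⊆ {p : ℝ × ℝ × ℝ | p.1 ^ 2 ≤ E * p.2.2 ∧ p.2.1 ^ 2 ≤ E * p.2.2 ∧
      p.2.2 ∈ Icc E⁻¹ E} := by
    intro p hp
    obtain ⟨ha, hr1, hr2⟩ := hp
    have hch : chD p ≤ Real.exp (s + 1) := chD_le_of_rD_lt ha hr2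
    have h2c : p.2.2 + (p.2.2)⁻¹ + (p.2.2)⁻¹ * (p.1 ^ 2 + p.2.1 ^ 2) = 2 * chD p := by
      unfold chD; ring
    have hE2 : 2 * chD p ≤ E := by
      have h1 : Real.exp (s + 2) = Real.exp (s + 1) * Real.exp 1 := by
        rw [← Real.exp_add]; ring_nf
      have hc1 : 1 ≤ chD p := chD_ge_one ha
      nlinarith [two_le_exp_one, Real.exp_pos (s+1)]
    have hinv : 0 < (p.2.2)⁻¹ := inv_pos.2 ha
    have hsplit : (p.2.2)⁻¹ * (p.1 ^ 2 + p.2.1 ^ 2)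
        = (p.2.2)⁻¹ * p.1 ^ 2 + (p.2.2)⁻¹ * p.2.1 ^ 2 := by ring
    have hb1 : (p.2.2)⁻¹ * p.1 ^ 2 ≤ E := by
      nlinarith [mul_nonneg hinv.le (sq_nonneg p.2.1)]
    have hb2 : (p.2.2)⁻¹ * p.2.1 ^ 2 ≤ E := by
      nlinarith [mul_nonneg hinv.le (sq_nonneg p.1)]
    have haE : p.2.2 ≤ E := by
      nlinarith [mul_nonneg hinv.le (add_nonneg (sq_nonneg p.1) (sq_nonneg p.2.1))]
    have hainvE : (p.2.2)⁻¹ ≤ E := by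
      nlinarith [mul_nonneg hinv.le (add_nonneg (sq_nonneg p.1) (sq_nonneg p.2.1))]
    refine ⟨?_, ?_, ?_, haE⟩
    · have : p.1 ^ 2 = p.2.2 * ((p.2.2)⁻¹ * p.1 ^ 2) := by
        field_simp
      rw [this]
      calc p.2.2 * ((p.2.2)⁻¹ * p.1 ^ 2) ≤ p.2.2 * E :=
            mul_le_mul_of_nonneg_left hb1 ha.le
        _ = E * p.2.2 := mul_comm _ _
    · have : p.2.1 ^ 2 = p.2.2 * ((p.2.2)⁻¹ * p.2.1 ^ 2) := by
        field_simp
      rw [this]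
      calc p.2.2 * ((p.2.2)⁻¹ * p.2.1 ^ 2) ≤ p.2.2 * E :=
            mul_le_mul_of_nonneg_left hb2 ha.le
        _ = E * p.2.2 := mul_comm _ _
    · have := inv_anti₀ hinv hainvE
      rwa [inv_inv] at this
  -- put everything together
  rw [step1]
  calc ∫⁻ p in T, ENNReal.ofReal ((p.2.2)⁻¹) *
        ENNReal.ofReal ((p.2.2)⁻¹ / (rD p ^ 2 * Real.sinh (rD p))) ∂volume
      ≤ ∫⁻ p in T, ENNReal.ofReal (Real.exp (-s) / (mykk * s ^ 2)) *
          ENNReal.ofReal ((p.2.2)⁻¹ * (p.2.2)⁻¹) ∂volume :=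
        setLIntegral_mono' hT hptwise
    _ ≤ ∫⁻ p in {p : ℝ × ℝ × ℝ | p.1 ^ 2 ≤ E * p.2.2 ∧ p.2.1 ^ 2 ≤ E * p.2.2 ∧
          p.2.2 ∈ Icc E⁻¹ E}, ENNReal.ofReal (Real.exp (-s) / (mykk * s ^ 2)) *
          ENNReal.ofReal ((p.2.2)⁻¹ * (p.2.2)⁻¹) ∂volume :=
        lintegral_mono_set hTBox
    _ = ENNReal.ofReal (Real.exp (-s) / (mykk * s ^ 2)) *
        ∫⁻ p in {p : ℝ × ℝ × ℝ | p.1 ^ 2 ≤ E * p.2.2 ∧ p.2.1 ^ 2 ≤ E * p.2.2 ∧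
          p.2.2 ∈ Icc E⁻¹ E}, ENNReal.ofReal ((p.2.2)⁻¹ * (p.2.2)⁻¹) ∂volume :=
        lintegral_const_mul' _ _ ENNReal.ofReal_ne_top
    _ ≤ ENNReal.ofReal (Real.exp (-s) / (mykk * s ^ 2)) *
        ENNReal.ofReal (8 * E * Real.log E) := mul_le_mul_right (box_bound hE1) _
    _ ≤ ENNReal.ofReal (myKK / s) := by
        rw [← ENNReal.ofReal_mul (by
          have := mykk_pos
          positivity)]
        apply ENNReal.ofReal_le_ofReal
        have hlogE : Real.log E = s + 2 := Real.log_exp _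
        have hEexp : E = Real.exp s * Real.exp 2 := by
          rw [hEdef, ← Real.exp_add]
        have hL : Real.exp (-s) / (mykk * s ^ 2) * (8 * E * Real.log E)
            = 8 * Real.exp 2 * (s + 2) / (mykk * s ^ 2) := by
          rw [hlogE, hEexp, Real.exp_neg, div_mul_eq_mul_div]
          congr 1
          field_simp
        rw [hL, myKK]
        rw [div_le_div_iff₀ (mul_pos mykk_pos (pow_pos hs0 2)) hs0]
        have hR : 8 * Real.exp 2 * (1 + 2 / myc0) / mykk * (mykk * s ^ 2)
            = 8 * Real.exp 2 * (1 + 2 / myc0) * s ^ 2 := by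
          have hkk := mykk_pos.ne'
          field_simp
        rw [hR]
        set u := 2 / myc0 with hudef
        have hu0 : 0 ≤ u := div_nonneg (by norm_num) myc0_pos.le
        have hu : u * myc0 = 2 := div_mul_cancel₀ 2 myc0_pos.ne'
        have hu2 : u * myc0 * s = 2 * s := by rw [hu]
        have key : 0 ≤ s * u * (s - myc0) :=
          mul_nonneg (mul_nonneg hs0.le hu0) (sub_nonneg.2 hs)
        have h3 : (s + 2) * s ≤ (1 + u) * s ^ 2 := by nlinarith [key, hu2]
        have h4 := mul_le_mul_of_nonneg_left h3 (by positivity : (0:ℝ) ≤ 8 * Real.exp 2)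
        nlinarith [h4]

end part4
section part5

lemma sum_inv_le (M : ℕ) : ∑ j ∈ Finset.range (M + 1), (myc0 + (j:ℝ))⁻¹ ≤
    myc0⁻¹ + (Real.log (myc0 + M) - Real.log myc0) := by
  induction M with
  | zero => simp
  | succ M ih =>
    rw [Finset.sum_range_succ]
    have ht : 0 < myc0 + (M:ℝ) := add_pos_of_pos_of_nonneg myc0_pos (Nat.cast_nonneg M)
    set t : ℝ := myc0 + (M:ℝ) with htdef
    have hstep : (t + 1)⁻¹ ≤ Real.log (t + 1) - Real.log t := by
      have hpos : 0 < (t + 1) / t := by positivity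
      have h := Real.one_sub_inv_le_log_of_pos hpos
      have h1 : ((t + 1) / t)⁻¹ = t / (t + 1) := by rw [inv_div]
      have h2 : 1 - t / (t + 1) = (t + 1)⁻¹ := by
        field_simp
        ring
      have h3 : Real.log ((t + 1) / t) = Real.log (t + 1) - Real.log t :=
        Real.log_div (by positivity) ht.ne'
      rw [h1, h2, h3] at h
      exact h
    have hc : myc0 + ((M:ℝ) + 1) = t + 1 := by rw [htdef]; ring
    push_cast
    rw [hc]
    have hc2 : myc0 + ((M:ℝ) + 1) = t + 1 := hc
    calc (∑ j ∈ Finset.range (M + 1), (myc0 + (j:ℝ))⁻¹) + (t + 1)⁻¹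
        ≤ (myc0⁻¹ + (Real.log (myc0 + M) - Real.log myc0)) + (t + 1)⁻¹ := by
          exact add_le_add_left ih _
      _ ≤ (myc0⁻¹ + (Real.log t - Real.log myc0)) + (Real.log (t + 1) - Real.log t) := by
          have : Real.log (myc0 + (M:ℝ)) = Real.log t := by rw [htdef]
          rw [this]
          linarith [hstep]
      _ = myc0⁻¹ + (Real.log (t + 1) - Real.log myc0) := by ring

lemma real_final {R : ℝ} (hR : 2 ≤ R) :
    ∑ j ∈ Finset.range (⌈R⌉₊), myKK / (myc0 + (j:ℝ)) ≤ myCC * Real.log R := by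
  set M := ⌈R⌉₊ with hMdef
  have hR0 : (0:ℝ) ≤ R := by linarith
  have hRM : R ≤ (M:ℝ) := Nat.le_ceil R
  have hM1 : (M:ℝ) < R + 1 := Nat.ceil_lt_add_one hR0
  have hlog2 : 0 < Real.log 2 := Real.log_pos one_lt_two
  have hlogR2 : Real.log 2 ≤ Real.log R := Real.log_le_log two_pos hR
  have hlogR : 0 < Real.log R := lt_of_lt_of_le hlog2 hlogR2
  have hsum : ∑ j ∈ Finset.range M, myKK / (myc0 + (j:ℝ))
      = myKK * ∑ j ∈ Finset.range M, (myc0 + (j:ℝ))⁻¹ := by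
    rw [Finset.mul_sum]
    apply Finset.sum_congr rfl
    intro j _
    rw [div_eq_mul_inv]
  have hnonneg : ∀ j ∈ Finset.range (M + 1), (0:ℝ) ≤ (myc0 + (j:ℝ))⁻¹ := by
    intro j _
    have : 0 < myc0 + (j:ℝ) := add_pos_of_pos_of_nonneg myc0_pos (Nat.cast_nonneg j)
    positivity
  have h1 : ∑ j ∈ Finset.range M, (myc0 + (j:ℝ))⁻¹
      ≤ ∑ j ∈ Finset.range (M + 1), (myc0 + (j:ℝ))⁻¹ :=
    Finset.sum_le_sum_of_subset_of_nonneg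
      (Finset.range_subset_range.2 (Nat.le_succ M)) (fun j hj _ => hnonneg j hj)
  have h2 := sum_inv_le M
  have h3 : Real.log (myc0 + (M:ℝ)) ≤ 2 * Real.log R := by
    have hle : myc0 + (M:ℝ) ≤ R ^ 2 := by
      have := myc0_le_one
      nlinarith
    calc Real.log (myc0 + (M:ℝ)) ≤ Real.log (R ^ 2) :=
          Real.log_le_log (add_pos_of_pos_of_nonneg myc0_pos (Nat.cast_nonneg M)) hle
      _ = 2 * Real.log R := by
          rw [Real.log_pow]; push_cast; ring
  have h4 : -Real.log myc0 ≤ myc0⁻¹ := by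
    have := Real.log_le_sub_one_of_pos (inv_pos.2 myc0_pos)
    rw [Real.log_inv] at this
    linarith [inv_pos.2 myc0_pos]
  have h5 : ∑ j ∈ Finset.range M, (myc0 + (j:ℝ))⁻¹ ≤ 2 * myc0⁻¹ + 2 * Real.log R := by
    linarith
  have h6 : ∑ j ∈ Finset.range M, myKK / (myc0 + (j:ℝ))
      ≤ myKK * (2 * myc0⁻¹ + 2 * Real.log R) := by
    rw [hsum]
    exact mul_le_mul_of_nonneg_left h5 myKK_pos.le
  have e1 : 2 * myKK / myc0 / Real.log 2 * Real.log 2 = 2 * myKK / myc0 :=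
    div_mul_cancel₀ _ hlog2.ne'
  have e2 : 2 * myKK / myc0 = myKK * (2 * myc0⁻¹) := by
    rw [div_eq_mul_inv]; ring
  have hcoef : (0:ℝ) ≤ 2 * myKK / myc0 / Real.log 2 :=
    div_nonneg (div_nonneg (by linarith [myKK_pos]) myc0_pos.le) hlog2.le
  have e3 : 2 * myKK / myc0 / Real.log 2 * Real.log 2
      ≤ 2 * myKK / myc0 / Real.log 2 * Real.log R :=
    mul_le_mul_of_nonneg_left hlogR2 hcoef
  rw [myCC]
  nlinarith [h6, e1, e2, e3, hlogR.le, myKK_pos.le]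


/-- `∫_{B(e,R) ∖ 2P₀} a⁻¹/(r(x)² sinh r(x)) dρ(x) ≲ log R` for `R ≥ 2`. -/
theorem stmt8 :
    ∃ C : ℝ, 0 < C ∧ ∀ R : ℝ, 2 ≤ R →
      ∫⁻ p in {p : ℝ × ℝ × ℝ | 0 < p.2.2 ∧ rD p < R} \ twoP0,
        ENNReal.ofReal ((p.2.2)⁻¹ / (rD p ^ 2 * Real.sinh (rD p))) ∂ρG
        ≤ ENNReal.ofReal (C * Real.log R) := by
  refine ⟨myCC, myCC_pos, fun R hR => ?_⟩
  set S : Set (ℝ × ℝ × ℝ) := {p : ℝ × ℝ × ℝ | 0 < p.2.2 ∧ rD p < R} \ twoP0 with hSdef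
  set T : ℕ → Set (ℝ × ℝ × ℝ) := fun j =>
    S ∩ {p | myc0 + (j:ℝ) ≤ rD p ∧ rD p < myc0 + (j:ℝ) + 1} with hTdef
  set M := ⌈R⌉₊ with hMdef
  have hRM : R ≤ (M:ℝ) := Nat.le_ceil R
  have hcover : S ⊆ ⋃ j : ℕ, T j := by
    intro p hp
    have hge : myc0 ≤ rD p := rD_ge_myc0 hp.1.1 hp.2
    have hnn : 0 ≤ rD p - myc0 := by linarith
    refine mem_iUnion.2 ⟨⌊rD p - myc0⌋₊, hp, ?_, ?_⟩
    · have := Nat.floor_le hnn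
      linarith
    · have := Nat.lt_floor_add_one (rD p - myc0)
      linarith
  have hvanish : ∀ j ∉ Finset.range M,
      (∫⁻ p in T j, ENNReal.ofReal ((p.2.2)⁻¹ / (rD p ^ 2 * Real.sinh (rD p))) ∂ρG) = 0 := by
    intro j hj
    have hjM : M ≤ j := le_of_not_gt (fun h => hj (Finset.mem_range.2 h))
    have hempty : T j = ∅ := by
      rw [eq_empty_iff_forall_notMem]
      rintro p ⟨⟨⟨_, hltR⟩, _⟩, hle, _⟩
      have h1 : (M:ℝ) ≤ (j:ℝ) := Nat.cast_le.2 hjM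
      have := myc0_pos
      linarith
    rw [hempty]
    simp
  have hbound : ∀ j ∈ Finset.range M,
      (∫⁻ p in T j, ENNReal.ofReal ((p.2.2)⁻¹ / (rD p ^ 2 * Real.sinh (rD p))) ∂ρG)
      ≤ ENNReal.ofReal (myKK / (myc0 + (j:ℝ))) := by
    intro j _
    have hsub : T j ⊆ {p : ℝ × ℝ × ℝ | 0 < p.2.2 ∧ myc0 + (j:ℝ) ≤ rD p ∧
        rD p < myc0 + (j:ℝ) + 1} := by
      rintro p ⟨⟨⟨hpos, _⟩, _⟩, hle, hlt⟩
      exact ⟨hpos, hle, hlt⟩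
    calc ∫⁻ p in T j, ENNReal.ofReal ((p.2.2)⁻¹ / (rD p ^ 2 * Real.sinh (rD p))) ∂ρG
        ≤ ∫⁻ p in {p : ℝ × ℝ × ℝ | 0 < p.2.2 ∧ myc0 + (j:ℝ) ≤ rD p ∧
            rD p < myc0 + (j:ℝ) + 1},
            ENNReal.ofReal ((p.2.2)⁻¹ / (rD p ^ 2 * Real.sinh (rD p))) ∂ρG :=
          lintegral_mono_set hsub
      _ ≤ ENNReal.ofReal (myKK / (myc0 + (j:ℝ))) :=
          shell_bound (le_add_of_nonneg_right (Nat.cast_nonneg j))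
  calc ∫⁻ p in S, ENNReal.ofReal ((p.2.2)⁻¹ / (rD p ^ 2 * Real.sinh (rD p))) ∂ρG
      ≤ ∫⁻ p in ⋃ j : ℕ, T j,
          ENNReal.ofReal ((p.2.2)⁻¹ / (rD p ^ 2 * Real.sinh (rD p))) ∂ρG :=
        lintegral_mono_set hcover
    _ ≤ ∑' j : ℕ, ∫⁻ p in T j,
          ENNReal.ofReal ((p.2.2)⁻¹ / (rD p ^ 2 * Real.sinh (rD p))) ∂ρG :=
        lintegral_iUnion_le _ _
    _ = ∑ j ∈ Finset.range M, ∫⁻ p in T j,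
          ENNReal.ofReal ((p.2.2)⁻¹ / (rD p ^ 2 * Real.sinh (rD p))) ∂ρG :=
        tsum_eq_sum hvanish
    _ ≤ ∑ j ∈ Finset.range M, ENNReal.ofReal (myKK / (myc0 + (j:ℝ))) :=
        Finset.sum_le_sum hbound
    _ = ENNReal.ofReal (∑ j ∈ Finset.range M, myKK / (myc0 + (j:ℝ))) := by
        rw [ENNReal.ofReal_sum_of_nonneg]
        intro j _
        have : 0 < myc0 + (j:ℝ) := add_pos_of_pos_of_nonneg myc0_pos (Nat.cast_nonneg j)
        exact div_nonneg myKK_pos.le this.le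
    _ ≤ ENNReal.ofReal (myCC * Real.log R) :=
        ENNReal.ofReal_le_ofReal (real_final hR)
end part5
end
end
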